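/- arXiv:1510.05434 — 9 statements merged into one kernel-verified Lean document; each statement's English description precedes it below -/
import Mathlib

section
/- The number of inversion sequences of length n avoiding the pattern 012 equals the Fibonacci number F_{2n-1} (with F_1 = F_2 = 1). -/
/-!
Since `e 0 = 0`, an inversion sequence contains `012` as soon as two of its positive entries
increase, so the avoiders are exactly the inversion sequences whose positive entries are weakly
decreasing. Let `C n a` count those whose positive entries are moreover at least `a ≥ 1`. The last
entry `v` is either `0` or lies in `[a, n]`, and removing it leaves a sequence counted by
`C n (max a v)`; hence `C (n + 1) a = C n a + ∑ v ∈ [a, n], C n v`. Together with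
`∑ t < k, F (2t + 1) = F (2k)` this recursion is solved by `C n a = F (2(n - a) + 1)`.
-/

open Finset

theorem Nat.sum_range_fib_two_mul_add_one (k : ℕ) :
    ∑ t ∈ range k, Nat.fib (2 * t + 1) = Nat.fib (2 * k) := by
  induction k with
  | zero => simp
  | succ k ih => rw [sum_range_succ, ih, Nat.mul_succ, Nat.fib_add_two]

theorem Nat.sum_Icc_fib_two_mul_sub_add_one (a n : ℕ) :
    ∑ v ∈ Icc a n, Nat.fib (2 * (n - v) + 1) = Nat.fib (2 * (n + 1 - a)) := by
  rw [← Finset.Ico_add_one_right_eq_Icc, sum_Ico_reflect (fun t => Nat.fib (2 * t + 1)) a le_rfl,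
    Nat.sub_self, Nat.Ico_zero_eq_range, Nat.sum_range_fib_two_mul_add_one]

namespace InversionSequence

-- The sequences counted by `C n a` above.
def posAntitone (n a : ℕ) : Finset (Fin n → ℕ) :=
  {f ∈ Fintype.piFinset fun i : Fin n => range (i + 1) |
    (∀ i j, i < j → 0 < f i → 0 < f j → f j ≤ f i) ∧ ∀ i, 0 < f i → a ≤ f i}

variable {n a : ℕ}

theorem not_exists_012_iff {e : Fin n → ℕ} (he : ∀ i, e i ≤ i) :
    (¬ ∃ i j k : Fin n, i < j ∧ j < k ∧ e i < e j ∧ e j < e k) ↔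
      ∀ i j, i < j → 0 < e i → 0 < e j → e j ≤ e i := by
  constructor
  · intro h i j hij hi hj
    by_contra! hlt
    have hi0 : 0 < (i : ℕ) := hi.trans_le (he i)
    have h0 : e ⟨0, by omega⟩ = 0 := Nat.le_zero.1 (he _)
    exact h ⟨⟨0, by omega⟩, i, j, Fin.mk_lt_of_lt_val hi0, hij, h0 ▸ hi, hlt⟩
  · rintro h ⟨i, j, k, -, hjk, hij, hjk'⟩
    exact (h j k hjk (by omega) (by omega)).not_gt hjk'

theorem mem_posAntitone {f : Fin n → ℕ} : f ∈ posAntitone n a ↔ (∀ i, f i ≤ i) ∧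
    (∀ i j, i < j → 0 < f i → 0 < f j → f j ≤ f i) ∧ ∀ i, 0 < f i → a ≤ f i := by
  simp [posAntitone]

theorem snoc_mem_posAntitone_iff {g : Fin n → ℕ} {v : ℕ} :
    Fin.snoc g v ∈ posAntitone (n + 1) a ↔
      g ∈ posAntitone n (max a v) ∧ v ≤ n ∧ (0 < v → a ≤ v) := by
  have not_last_lt : ∀ i : Fin n, ¬ Fin.last n < i.castSucc := fun i =>
    (Fin.castSucc_lt_last i).asymm
  have le_of_pos : ∀ i : Fin n,
      (0 < g i → 0 < v → v ≤ g i) ↔ (0 < g i → v ≤ g i) := by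
    intro i
    rcases Nat.eq_zero_or_pos v with rfl | hv <;> simp [*]
  simp only [mem_posAntitone, Fin.forall_fin_succ', Fin.snoc_castSucc, Fin.snoc_last,
    Fin.val_castSucc, Fin.val_last, Fin.castSucc_lt_castSucc_iff, Fin.castSucc_lt_last,
    lt_irrefl, not_last_lt, le_of_pos, max_le_iff, IsEmpty.forall_iff, forall_and,
    and_true, forall_const]
  tauto

theorem card_filter_last_eq {v : ℕ} (hvn : v ≤ n) (hav : 0 < v → a ≤ v) :
    #{f ∈ posAntitone (n + 1) a | f (Fin.last n) = v} = #(posAntitone n (max a v)) := by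
  refine card_nbij' Fin.init (Fin.snoc · v) ?_ ?_ ?_ ?_
  · intro f hf
    rw [mem_coe, mem_filter] at hf
    obtain ⟨hf, rfl⟩ := hf
    rw [← Fin.snoc_init_self f, snoc_mem_posAntitone_iff] at hf
    exact hf.1
  · intro g hg
    rw [mem_coe] at hg
    rw [mem_coe, mem_filter, snoc_mem_posAntitone_iff]
    exact ⟨⟨hg, hvn, hav⟩, Fin.snoc_last _ _⟩
  · intro f hf
    rw [mem_coe, mem_filter] at hf
    rw [← hf.2]
    exact Fin.snoc_init_self f
  · intro g _
    exact Fin.init_snoc _ _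

theorem card_posAntitone_succ (ha : 0 < a) :
    #(posAntitone (n + 1) a) = #(posAntitone n a) + ∑ v ∈ Icc a n, #(posAntitone n v) := by
  have last_mem : ∀ f ∈ posAntitone (n + 1) a, f (Fin.last n) ∈ insert 0 (Icc a n) := by
    intro f hf
    rw [← Fin.snoc_init_self f, snoc_mem_posAntitone_iff] at hf
    simp only [mem_insert, mem_Icc] at hf ⊢
    omega
  rw [card_eq_sum_card_fiberwise last_mem, sum_insert fun h => (mem_Icc.1 h).1.not_gt ha,
    card_filter_last_eq (Nat.zero_le n) (by simp), _root_.max_zero]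
  congr 1
  refine sum_congr rfl fun v hv => ?_
  rw [mem_Icc] at hv
  rw [card_filter_last_eq hv.2 fun _ => hv.1, max_eq_right hv.1]

theorem card_posAntitone (ha : 0 < a) : #(posAntitone n a) = Nat.fib (2 * (n - a) + 1) := by
  induction n generalizing a with
  | zero => simp [posAntitone]
  | succ n ih =>
    rw [card_posAntitone_succ ha, ih ha,
      sum_congr rfl fun v hv => ih (ha.trans_le (mem_Icc.1 hv).1),
      Nat.sum_Icc_fib_two_mul_sub_add_one]
    rcases le_or_gt a n with han | hna
    · rw [Nat.sub_add_comm han, Nat.mul_succ]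
      exact (Nat.fib_add_two (n := 2 * (n - a) + 1)).symm
    · rw [Nat.sub_eq_zero_of_le hna.le, Nat.sub_eq_zero_of_le hna]
      simp

end InversionSequence

/-- The number of inversion sequences of length `n` avoiding the pattern 012
equals the Fibonacci number `F_{2n-1}` (with `F_1 = F_2 = 1`). -/
theorem inv_avoid_012_eq_fib (n : ℕ) (hn : 1 ≤ n) :
    Set.ncard {e : Fin n → ℕ | (∀ i : Fin n, e i ≤ (i : ℕ)) ∧
      ¬ ∃ i j k : Fin n, i < j ∧ j < k ∧ e i < e j ∧ e j < e k} =
    Nat.fib (2 * n - 1) := by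
  have avoiders_eq : {e : Fin n → ℕ | (∀ i : Fin n, e i ≤ (i : ℕ)) ∧
      ¬ ∃ i j k : Fin n, i < j ∧ j < k ∧ e i < e j ∧ e j < e k} =
        ↑(InversionSequence.posAntitone n 1) := by
    ext e
    rw [Set.mem_ofPred_eq, mem_coe, InversionSequence.mem_posAntitone]
    refine and_congr_right fun he => ?_
    rw [InversionSequence.not_exists_012_iff he]
    exact (and_iff_left fun _ hi => hi).symm
  rw [avoiders_eq, Set.ncard_coe_finset, InversionSequence.card_posAntitone one_pos]
  congr 1
  omega
end

section
/- An inversion sequence avoids the pattern 012 if and only if its positive entries form a weakly decreasing subsequence. -/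
section Pattern012

variable {ι : Type*} [Preorder ι] {e : ι → ℕ}

theorem not_exists_012_of_pos_antitone
    (h : ∀ i j, i < j → 0 < e i → 0 < e j → e j ≤ e i) :
    ¬ ∃ i j k, i < j ∧ j < k ∧ e i < e j ∧ e j < e k := by
  rintro ⟨i, j, k, -, hjk, hij, hjk'⟩
  have hj : 0 < e j := (Nat.zero_le _).trans_lt hij
  exact (h j k hjk hj (hj.trans hjk')).not_gt hjk'

/-- A zero entry in front of the positive entry `e i` would start a `012` with `e i < e j`. -/
theorem apply_le_apply_of_not_exists_012 (hzero : ∀ i, 0 < e i → ∃ z < i, e z = 0)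
    (h : ¬ ∃ i j k, i < j ∧ j < k ∧ e i < e j ∧ e j < e k)
    {i j : ι} (hij : i < j) (hi : 0 < e i) : e j ≤ e i := by
  by_contra! hlt
  obtain ⟨z, hzi, hz⟩ := hzero i hi
  exact h ⟨z, i, j, hzi, hij, hz ▸ hi, hlt⟩

end Pattern012

theorem Fin.exists_lt_apply_eq_zero_of_le_val {n : ℕ} {e : Fin n → ℕ}
    (he : ∀ i : Fin n, e i ≤ (i : ℕ)) (i : Fin n) (hi : 0 < e i) :
    ∃ z < i, e z = 0 :=
  ⟨⟨0, i.pos⟩, Fin.mk_lt_of_lt_val (hi.trans_le (he i)),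
    Nat.eq_zero_of_le_zero (he ⟨0, i.pos⟩)⟩

/-- An inversion sequence avoids the pattern 012 if and only if its positive
entries form a weakly decreasing subsequence. -/
theorem avoid_012_iff_pos_weakly_decreasing (n : ℕ) (e : Fin n → ℕ)
    (he : ∀ i : Fin n, e i ≤ (i : ℕ)) :
    (¬ ∃ i j k : Fin n, i < j ∧ j < k ∧ e i < e j ∧ e j < e k) ↔
      ∀ i j : Fin n, i < j → 0 < e i → 0 < e j → e j ≤ e i :=
  ⟨fun h _ _ hij hi _ =>
      apply_le_apply_of_not_exists_012 (Fin.exists_lt_apply_eq_zero_of_le_val he) h hij hi,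
    not_exists_012_of_pos_antitone⟩
end

section
/- An inversion sequence avoids the pattern 021 if and only if its positive entries form a weakly increasing subsequence. -/
/-! An inversion sequence starts with `e 0 = 0`, so any descent `e j < e i` (`i < j`) between
positive entries is preceded by a zero, and `0, e i, e j` is an occurrence of 021. Conversely,
the two larger letters of an occurrence of 021 are positive and form such a descent. -/

theorem exists_lt_eq_zero_of_pos {n : ℕ} {e : Fin n → ℕ} (he : ∀ i : Fin n, e i ≤ (i : ℕ))
    {i : Fin n} (hi : 0 < e i) : ∃ z : Fin n, z < i ∧ e z = 0 :=
  ⟨⟨0, i.pos⟩, Fin.lt_def.mpr (hi.trans_le (he i)), Nat.le_zero.mp (he ⟨0, i.pos⟩)⟩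

theorem exists_021_of_pos_descent {n : ℕ} {e : Fin n → ℕ} (he : ∀ i : Fin n, e i ≤ (i : ℕ))
    {i j : Fin n} (hij : i < j) (hj : 0 < e j) (hji : e j < e i) :
    ∃ a b c : Fin n, a < b ∧ b < c ∧ e a < e c ∧ e c < e b := by
  obtain ⟨z, hzi, hz⟩ := exists_lt_eq_zero_of_pos he (hj.trans hji)
  exact ⟨z, i, j, hzi, hij, hz ▸ hj, hji⟩

/-- An inversion sequence avoids the pattern 021 if and only if its positive
entries form a weakly increasing subsequence. -/
theorem avoid_021_iff_pos_weakly_increasing (n : ℕ) (e : Fin n → ℕ)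
    (he : ∀ i : Fin n, e i ≤ (i : ℕ)) :
    (¬ ∃ i j k : Fin n, i < j ∧ j < k ∧ e i < e k ∧ e k < e j) ↔
      ∀ i j : Fin n, i < j → 0 < e i → 0 < e j → e i ≤ e j := by
  constructor
  · intro havoid i j hij _ hj
    by_contra! hji
    exact havoid (exists_021_of_pos_descent he hij hj hji)
  · rintro hmono ⟨i, j, k, -, hjk, hik, hkj⟩
    exact (hmono j k hjk (by omega) (by omega)).not_gt hkj
end

section
/- For all n ≥ 1, the number of inversion sequences of length n avoiding 210 equals the number of inversion sequences of length n avoiding 201. -/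
/-!
Call a position of `e` dominated when its entry is smaller than some earlier entry. Rewriting the
dominated entries with any values that stay below the prefix maxima at their positions changes
neither the prefix maxima nor the set of dominated positions. Relative to this skeleton, `e` avoids
210 iff its dominated entries are weakly increasing, and avoids 201 iff each dominated entry is the
largest of the remaining dominated values that fit below its prefix maximum. For sorted bounds,
a multiset of values that fits in some order has exactly one arrangement of each kind, so sorting
and the greedy rearrangement are mutually inverse bijections.
-/

namespace InversionSequence

open List

section Lists

variable {α : Type*} [LinearOrder α]

theorem pairwise_iff_of_pairwise_lt {R : α → α → Prop} {L : List α}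
    (hL : L.Pairwise (· < ·)) : L.Pairwise R ↔ ∀ a ∈ L, ∀ b ∈ L, a < b → R a b := by
  refine ⟨fun h a ha b hb => ?_, fun h => hL.imp_of_mem fun ha hb hab => h _ ha _ hb hab⟩
  refine Pairwise.forall_of_forall_of_flip (R := fun a b => a < b → R a b)
    (fun x _ hx => absurd hx (lt_irrefl x)) (h.imp fun {a b} hR (_ : a < b) => hR)
    (hL.imp fun hxy hyx => absurd (hxy.trans hyx) (lt_irrefl _)) ha hb

/-- The junk value `b` is returned when no entry of `v` lies below `b`. -/
def maxBelow (b : α) (v : List α) : α :=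
  ((v.filter (· < b)).maximum).unbotD b

theorem maxBelow_eq_of_isGreatest {b m : α} {v : List α}
    (h : IsGreatest {z | z ∈ v ∧ z < b} m) : maxBelow b v = m := by
  have : (v.filter (· < b)).maximum = m :=
    maximum_eq_coe_iff.2 ⟨by simpa using h.1, fun a ha => h.2 (by simpa using ha)⟩
  simp [maxBelow, this]

theorem isGreatest_maxBelow {b y : α} {v : List α} (hy : y ∈ v) (hyb : y < b) :
    IsGreatest {z | z ∈ v ∧ z < b} (maxBelow b v) := by
  obtain ⟨m, hm⟩ := WithBot.ne_bot_iff_exists.1 (maximum_ne_bot_of_ne_nil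
    (ne_nil_of_mem (a := y) (l := v.filter (· < b)) (by simpa using ⟨hy, hyb⟩)))
  have hm := maximum_eq_coe_iff.1 hm.symm
  have hmax : IsGreatest {z | z ∈ v ∧ z < b} m :=
    ⟨by simpa using hm.1, fun z hz => hm.2 z (by simpa using hz)⟩
  rwa [maxBelow_eq_of_isGreatest hmax]

theorem forall₂_erase_tail {v b : List α} (hb : b.Pairwise (· ≤ ·))
    (h : Forall₂ (· < ·) v b) {x : α} (hx : x ∈ v) :
    Forall₂ (· < ·) (v.erase x) b.tail := by
  induction h generalizing x with
  | nil => simp at hx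
  | @cons y b₀ ys bs hyb hys ih =>
    rcases eq_or_ne x y with rfl | hne
    · simpa using hys
    have hxys : x ∈ ys := (mem_cons.1 hx).resolve_left hne
    rw [erase_cons_tail (by simpa using hne.symm)]
    rcases hys with _ | _
    · simp at hxys
    · exact .cons (hyb.trans_le ((pairwise_cons.1 hb).1 _ mem_cons_self))
        (ih (pairwise_cons.1 hb).2 hxys)

theorem forall₂_lt_of_perm_of_sorted {b : List α} (hb : b.Pairwise (· ≤ ·)) :
    ∀ {v w : List α}, v ~ w → w.Pairwise (· ≤ ·) → Forall₂ (· < ·) v b →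
      Forall₂ (· < ·) w b := by
  induction b with
  | nil =>
    rintro v w hvw - ⟨⟩
    simpa using hvw
  | cons b₀ bs ih =>
    rintro _ w hvw hw (_ | @⟨v₀, _, vs, _, hvb₀, hvs⟩)
    obtain _ | ⟨w₀, ws⟩ := w
    · simp at hvw
    have hw₀v : w₀ ∈ v₀ :: vs := hvw.mem_iff.2 mem_cons_self
    have hw₀v₀ : w₀ ≤ v₀ := by
      rcases mem_cons.1 (hvw.mem_iff.1 mem_cons_self) with h | h
      · exact h.ge
      · exact rel_of_pairwise_cons hw h
    refine .cons (hw₀v₀.trans_lt hvb₀) (ih (pairwise_cons.1 hb).2 ?_ (pairwise_cons.1 hw).2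
      (forall₂_erase_tail hb (.cons hvb₀ hvs) hw₀v))
    simpa using hvw.erase w₀

def greedy : List α → List α → List α
  | [], _ => []
  | b :: bs, v => maxBelow b v :: greedy bs (v.erase (maxBelow b v))

/-- Each entry of `v` is the largest among itself and the later entries below its bound in `b`:
this is what `greedy` produces. -/
def IsGreedy (v b : List α) : Prop :=
  (v.zip b).Pairwise fun p q => q.1 < p.2 → q.1 ≤ p.1

theorem greedy_spec {b : List α} (hb : b.Pairwise (· ≤ ·)) :
    ∀ {v : List α}, Forall₂ (· < ·) v b →
      greedy b v ~ v ∧ Forall₂ (· < ·) (greedy b v) b ∧ IsGreedy (greedy b v) b := by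
  induction b with
  | nil => rintro v ⟨⟩; simp [greedy, IsGreedy]
  | cons b₀ bs ih =>
    rintro _ (_ | ⟨hvb, hvs⟩)
    obtain ⟨hxv, hxb⟩ := (isGreatest_maxBelow mem_cons_self hvb).1
    obtain ⟨hperm, hfits, hgreedy⟩ := ih (pairwise_cons.1 hb).2
      (forall₂_erase_tail hb (.cons hvb hvs) hxv)
    refine ⟨(hperm.cons _).trans (perm_cons_erase hxv).symm, .cons hxb hfits, ?_⟩
    refine pairwise_cons.2 ⟨?_, hgreedy⟩
    rintro ⟨y, c⟩ hyc (hy : y < b₀)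
    have hyv := mem_of_mem_erase (hperm.mem_iff.1 (of_mem_zip hyc).1)
    exact (isGreatest_maxBelow mem_cons_self hvb).2 ⟨hyv, hy⟩

theorem greedy_eq_of_isGreedy {b : List α} :
    ∀ {g w : List α}, Forall₂ (· < ·) g b → IsGreedy g b → w ~ g → greedy b w = g := by
  induction b with
  | nil => rintro g w ⟨⟩; simp [greedy]
  | cons b₀ bs ih =>
    rintro _ w (_ | @⟨g₀, _, gs, _, hgb, hgs⟩) hg hperm
    obtain ⟨hhead, htail⟩ := pairwise_cons.1 hg
    have hmax : maxBelow b₀ w = g₀ := by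
      refine maxBelow_eq_of_isGreatest ⟨⟨hperm.mem_iff.2 mem_cons_self, hgb⟩, ?_⟩
      rintro z ⟨hz, hzb⟩
      rcases mem_cons.1 (hperm.mem_iff.1 hz) with rfl | hz
      · rfl
      rw [← map_fst_zip hgs.length_eq.le] at hz
      obtain ⟨⟨_, c⟩, hzc, rfl⟩ := mem_map.1 hz
      exact hhead _ hzc hzb
    rw [greedy, hmax, ih hgs htail (by simpa using hperm.erase g₀)]

end Lists

section Positions

variable {ι : Type*} [LinearOrder ι] [LocallyFiniteOrderBot ι]
variable {e : ι → ℕ} {v : List ℕ} {i j : ι}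

def prefixMax (e : ι → ℕ) (i : ι) : ℕ := (Finset.Iio i).sup e

theorem prefixMax_mono (e : ι → ℕ) : Monotone (prefixMax e) :=
  fun _ _ hij => Finset.sup_mono (Finset.Iio_subset_Iio hij)

theorem le_prefixMax (h : i < j) : e i ≤ prefixMax e j :=
  Finset.le_sup (Finset.mem_Iio.2 h)

theorem lt_prefixMax_iff {a : ℕ} {j : ι} : a < prefixMax e j ↔ ∃ i < j, a < e i := by
  simp [prefixMax, Finset.lt_sup_iff]

variable [Fintype ι]

/-- The positions that are not weak left-to-right maxima, in increasing order. -/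
def dominatedPositions (e : ι → ℕ) : List ι :=
  (Finset.univ.filter fun i => e i < prefixMax e i).sort

def dominatedValues (e : ι → ℕ) : List ℕ := (dominatedPositions e).map e

def dominatedBounds (e : ι → ℕ) : List ℕ := (dominatedPositions e).map (prefixMax e)

def replaceDominated (e : ι → ℕ) (v : List ℕ) (i : ι) : ℕ :=
  if e i < prefixMax e i then v.getD ((dominatedPositions e).idxOf i) 0 else e i

theorem mem_dominatedPositions : i ∈ dominatedPositions e ↔ e i < prefixMax e i := by
  simp [dominatedPositions]

theorem pairwise_lt_dominatedPositions (e : ι → ℕ) :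
    (dominatedPositions e).Pairwise (· < ·) :=
  sortedLT_iff_pairwise.1 (Finset.sortedLT_sort _)

theorem nodup_dominatedPositions (e : ι → ℕ) : (dominatedPositions e).Nodup :=
  Finset.sort_nodup _ _

theorem pairwise_dominatedBounds (e : ι → ℕ) : (dominatedBounds e).Pairwise (· ≤ ·) :=
  pairwise_map.2 ((pairwise_lt_dominatedPositions e).imp fun h => prefixMax_mono e h.le)

theorem forall₂_dominatedValues (e : ι → ℕ) :
    Forall₂ (· < ·) (dominatedValues e) (dominatedBounds e) :=
  forall₂_map_left_iff.2 <| forall₂_map_right_iff.2 <| forall₂_same.2 fun _ hi =>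
    mem_dominatedPositions.1 hi

theorem getElem_dominatedBounds_idxOf (hi : i ∈ dominatedPositions e) :
    (dominatedBounds e)[(dominatedPositions e).idxOf i]'(by
      simpa [dominatedBounds] using idxOf_lt_length_of_mem hi) = prefixMax e i := by
  simp [dominatedBounds, getElem_idxOf]

theorem replaceDominated_of_not_lt (hi : ¬ e i < prefixMax e i) :
    replaceDominated e v i = e i :=
  if_neg hi

theorem replaceDominated_lt (hv : Forall₂ (· < ·) v (dominatedBounds e))
    (hi : e i < prefixMax e i) : replaceDominated e v i < prefixMax e i := by
  have hmem := mem_dominatedPositions.2 hi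
  have hidx := idxOf_lt_length_of_mem hmem
  have hlen : v.length = (dominatedPositions e).length := by
    simpa [dominatedBounds] using hv.length_eq
  rw [replaceDominated, if_pos hi, getD_eq_getElem _ _ (hlen ▸ hidx),
    ← getElem_dominatedBounds_idxOf hmem]
  exact hv.get _ _

/-- A prefix maximum is attained at a position that is not dominated, whose entry is kept. -/
theorem prefixMax_replaceDominated (hv : Forall₂ (· < ·) v (dominatedBounds e)) :
    prefixMax (replaceDominated e v) = prefixMax e := by
  funext i
  refine le_antisymm (Finset.sup_le fun j hj => ?_) ?_
  · have hji := Finset.mem_Iio.1 hj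
    by_cases hd : e j < prefixMax e j
    · exact (replaceDominated_lt hv hd).le.trans (prefixMax_mono e hji.le)
    · exact (replaceDominated_of_not_lt hd).trans_le (le_prefixMax hji)
  rcases (Finset.Iio i).eq_empty_or_nonempty with hemp | hne
  · simp [prefixMax, hemp]
  obtain ⟨j, hj, hjmax⟩ := Finset.exists_mem_eq_sup _ hne e
  have hji := Finset.mem_Iio.1 hj
  have hd : ¬ e j < prefixMax e j := fun hd =>
    (hd.trans_le (prefixMax_mono e hji.le)).ne' hjmax
  calc prefixMax e i = replaceDominated e v j :=
        hjmax.trans (replaceDominated_of_not_lt hd).symm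
    _ ≤ prefixMax (replaceDominated e v) i := le_prefixMax hji

theorem replaceDominated_lt_prefixMax_iff (hv : Forall₂ (· < ·) v (dominatedBounds e)) :
    replaceDominated e v i < prefixMax (replaceDominated e v) i ↔ e i < prefixMax e i := by
  rw [prefixMax_replaceDominated hv]
  by_cases hd : e i < prefixMax e i
  · simp [hd, replaceDominated_lt hv hd]
  · simp [hd, replaceDominated_of_not_lt hd]

theorem dominatedPositions_replaceDominated (hv : Forall₂ (· < ·) v (dominatedBounds e)) :
    dominatedPositions (replaceDominated e v) = dominatedPositions e := by
  simp only [dominatedPositions, replaceDominated_lt_prefixMax_iff hv]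

theorem dominatedBounds_replaceDominated (hv : Forall₂ (· < ·) v (dominatedBounds e)) :
    dominatedBounds (replaceDominated e v) = dominatedBounds e := by
  rw [dominatedBounds, dominatedPositions_replaceDominated hv, prefixMax_replaceDominated hv,
    dominatedBounds]

theorem dominatedValues_replaceDominated (hv : Forall₂ (· < ·) v (dominatedBounds e)) :
    dominatedValues (replaceDominated e v) = v := by
  have hlen : v.length = (dominatedPositions e).length := by
    simpa [dominatedBounds] using hv.length_eq
  rw [dominatedValues, dominatedPositions_replaceDominated hv]
  refine ext_getElem (by simp [hlen]) fun t ht _ => ?_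
  have hmem := getElem_mem (l := dominatedPositions e) (n := t) (by simpa using ht)
  rw [getElem_map, replaceDominated, if_pos (mem_dominatedPositions.1 hmem),
    (nodup_dominatedPositions e).idxOf_getElem, getD_eq_getElem]

theorem replaceDominated_replaceDominated (hv : Forall₂ (· < ·) v (dominatedBounds e))
    (w : List ℕ) : replaceDominated (replaceDominated e v) w = replaceDominated e w := by
  funext i
  by_cases hd : e i < prefixMax e i
  · rw [replaceDominated, if_pos ((replaceDominated_lt_prefixMax_iff hv).2 hd),
      dominatedPositions_replaceDominated hv, replaceDominated, if_pos hd]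
  · rw [replaceDominated_of_not_lt (mt (replaceDominated_lt_prefixMax_iff hv).1 hd),
      replaceDominated_of_not_lt hd, replaceDominated_of_not_lt hd]

theorem replaceDominated_dominatedValues (e : ι → ℕ) :
    replaceDominated e (dominatedValues e) = e := by
  funext i
  by_cases hd : e i < prefixMax e i
  · have hidx := idxOf_lt_length_of_mem (mem_dominatedPositions.2 hd)
    rw [replaceDominated, if_pos hd, getD_eq_getElem _ _ (by simpa [dominatedValues] using hidx)]
    simp [dominatedValues, getElem_idxOf]
  · exact replaceDominated_of_not_lt hd

theorem replaceDominated_le {β : ι → ℕ} (hβ : Monotone β) (he : e ≤ β) {v : List ℕ}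
    (hv : Forall₂ (· < ·) v (dominatedBounds e)) : replaceDominated e v ≤ β := by
  intro i
  by_cases hd : e i < prefixMax e i
  · exact (replaceDominated_lt hv hd).le.trans
      (Finset.sup_le fun j hj => (he j).trans (hβ (Finset.mem_Iio.1 hj).le))
  · exact (replaceDominated_of_not_lt hd).trans_le (he i)

end Positions

section Patterns

variable {ι : Type*} [LinearOrder ι]

def Avoids210 (e : ι → ℕ) : Prop :=
  ¬ ∃ i j k : ι, i < j ∧ j < k ∧ e j < e i ∧ e k < e j

def Avoids201 (e : ι → ℕ) : Prop :=
  ¬ ∃ i j k : ι, i < j ∧ j < k ∧ e j < e k ∧ e k < e i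

variable [LocallyFiniteOrderBot ι] [Fintype ι] {e : ι → ℕ}

/-- A 210 pattern may be taken with its `1` and `0` at dominated positions. -/
theorem avoids210_iff_sorted : Avoids210 e ↔ (dominatedValues e).Pairwise (· ≤ ·) := by
  rw [dominatedValues, pairwise_map,
    pairwise_iff_of_pairwise_lt (pairwise_lt_dominatedPositions e)]
  simp only [mem_dominatedPositions]
  constructor
  · intro h j hj k _ hjk
    obtain ⟨i, hij, hji⟩ := lt_prefixMax_iff.1 hj
    exact not_lt.1 fun hkj => h ⟨i, j, k, hij, hjk, hji, hkj⟩
  · rintro h ⟨i, j, k, hij, hjk, hji, hkj⟩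
    have hj : e j < prefixMax e j := hji.trans_le (le_prefixMax hij)
    have hk : e k < prefixMax e k := (hkj.trans hji).trans_le (le_prefixMax (hij.trans hjk))
    exact hkj.not_ge (h j hj k hk hjk)

/-- A 201 pattern may be taken with its `0` and `1` at dominated positions. -/
theorem avoids201_iff_isGreedy :
    Avoids201 e ↔ IsGreedy (dominatedValues e) (dominatedBounds e) := by
  rw [IsGreedy, dominatedValues, dominatedBounds, zip_map', pairwise_map,
    pairwise_iff_of_pairwise_lt (pairwise_lt_dominatedPositions e)]
  simp only [mem_dominatedPositions]
  constructor
  · intro h j _ k _ hjk hkj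
    obtain ⟨i, hij, hki⟩ := lt_prefixMax_iff.1 hkj
    exact not_lt.1 fun hjk' => h ⟨i, j, k, hij, hjk, hjk', hki⟩
  · rintro h ⟨i, j, k, hij, hjk, hjk', hki⟩
    have hj : e j < prefixMax e j := (hjk'.trans hki).trans_le (le_prefixMax hij)
    have hk : e k < prefixMax e k := hki.trans_le (le_prefixMax (hij.trans hjk))
    exact hjk'.not_ge (h j hj k hk hjk (hki.trans_le (le_prefixMax hij)))

end Patterns

section Bijection

variable {ι : Type*} [LinearOrder ι] [LocallyFiniteOrderBot ι] [Fintype ι] {e : ι → ℕ}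

def sortDominated (e : ι → ℕ) : ι → ℕ :=
  replaceDominated e ((dominatedValues e).insertionSort (· ≤ ·))

def greedyDominated (e : ι → ℕ) : ι → ℕ :=
  replaceDominated e (greedy (dominatedBounds e) (dominatedValues e))

theorem forall₂_insertionSort_dominatedValues (e : ι → ℕ) :
    Forall₂ (· < ·) ((dominatedValues e).insertionSort (· ≤ ·)) (dominatedBounds e) :=
  forall₂_lt_of_perm_of_sorted (pairwise_dominatedBounds e) (perm_insertionSort _ _).symm
    (pairwise_insertionSort _ _) (forall₂_dominatedValues e)

theorem greedy_dominatedValues_spec (e : ι → ℕ) :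
    greedy (dominatedBounds e) (dominatedValues e) ~ dominatedValues e ∧
      Forall₂ (· < ·) (greedy (dominatedBounds e) (dominatedValues e)) (dominatedBounds e) ∧
      IsGreedy (greedy (dominatedBounds e) (dominatedValues e)) (dominatedBounds e) :=
  greedy_spec (pairwise_dominatedBounds e) (forall₂_dominatedValues e)

theorem avoids210_sortDominated (e : ι → ℕ) : Avoids210 (sortDominated e) := by
  rw [avoids210_iff_sorted, sortDominated,
    dominatedValues_replaceDominated (forall₂_insertionSort_dominatedValues e)]
  exact pairwise_insertionSort _ _

theorem avoids201_greedyDominated (e : ι → ℕ) : Avoids201 (greedyDominated e) := by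
  obtain ⟨-, hfits, hgreedy⟩ := greedy_dominatedValues_spec e
  rwa [avoids201_iff_isGreedy, greedyDominated, dominatedValues_replaceDominated hfits,
    dominatedBounds_replaceDominated hfits]

theorem sortDominated_greedyDominated (he : Avoids210 e) :
    sortDominated (greedyDominated e) = e := by
  obtain ⟨hperm, hfits, -⟩ := greedy_dominatedValues_spec e
  have hsort : (greedy (dominatedBounds e) (dominatedValues e)).insertionSort (· ≤ ·) =
      dominatedValues e :=
    ((perm_insertionSort _ _).trans hperm).eq_of_pairwise' (pairwise_insertionSort _ _)
      (avoids210_iff_sorted.1 he)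
  rw [sortDominated, greedyDominated, dominatedValues_replaceDominated hfits, hsort,
    replaceDominated_replaceDominated hfits, replaceDominated_dominatedValues]

theorem greedyDominated_sortDominated (he : Avoids201 e) :
    greedyDominated (sortDominated e) = e := by
  have hfits := forall₂_insertionSort_dominatedValues e
  have hgreedy : greedy (dominatedBounds e) ((dominatedValues e).insertionSort (· ≤ ·)) =
      dominatedValues e :=
    greedy_eq_of_isGreedy (forall₂_dominatedValues e) (avoids201_iff_isGreedy.1 he)
      (perm_insertionSort _ _)
  rw [greedyDominated, sortDominated, dominatedValues_replaceDominated hfits,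
    dominatedBounds_replaceDominated hfits, hgreedy, replaceDominated_replaceDominated hfits,
    replaceDominated_dominatedValues]

def avoids210EquivAvoids201 {β : ι → ℕ} (hβ : Monotone β) :
    {e : ι → ℕ | e ≤ β ∧ Avoids210 e} ≃
      {e : ι → ℕ | e ≤ β ∧ Avoids201 e} where
  toFun e := ⟨greedyDominated e,
    replaceDominated_le hβ e.2.1 (greedy_dominatedValues_spec e.1).2.1,
    avoids201_greedyDominated e.1⟩
  invFun e := ⟨sortDominated e,
    replaceDominated_le hβ e.2.1 (forall₂_insertionSort_dominatedValues e.1),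
    avoids210_sortDominated e.1⟩
  left_inv e := Subtype.ext (sortDominated_greedyDominated e.2.2)
  right_inv e := Subtype.ext (greedyDominated_sortDominated e.2.2)

end Bijection

end InversionSequence

theorem inv_avoid_210_eq_avoid_201_general (n : ℕ) :
    Set.ncard {e : Fin n → ℕ | (∀ i : Fin n, e i ≤ (i : ℕ)) ∧
      ¬ ∃ i j k : Fin n, i < j ∧ j < k ∧ e j < e i ∧ e k < e j} =
    Set.ncard {e : Fin n → ℕ | (∀ i : Fin n, e i ≤ (i : ℕ)) ∧
      ¬ ∃ i j k : Fin n, i < j ∧ j < k ∧ e j < e k ∧ e k < e i} := by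
  rw [← Nat.card_coe_set_eq, ← Nat.card_coe_set_eq]
  exact Nat.card_congr (InversionSequence.avoids210EquivAvoids201 Fin.val_strictMono.monotone)

/-- For `n ≥ 1`, the number of inversion sequences of length `n` avoiding 210
equals the number of inversion sequences of length `n` avoiding 201. -/
theorem inv_avoid_210_eq_avoid_201 (n : ℕ) (hn : 1 ≤ n) :
    Set.ncard {e : Fin n → ℕ | (∀ i : Fin n, e i ≤ (i : ℕ)) ∧
      ¬ ∃ i j k : Fin n, i < j ∧ j < k ∧ e j < e i ∧ e k < e j} =
    Set.ncard {e : Fin n → ℕ | (∀ i : Fin n, e i ≤ (i : ℕ)) ∧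
      ¬ ∃ i j k : Fin n, i < j ∧ j < k ∧ e j < e k ∧ e k < e i} :=
  inv_avoid_210_eq_avoid_201_general n
end

section
/- The number of 000-avoiding inversion sequences of length n equals the number of 0-1-2 increasing trees with n+1 vertices labeled 0,...,n, i.e., rooted unordered trees in which each vertex has at most two children and labels increase along every root-to-leaf path. -/
/-! Reading `e i` as the parent of vertex `i + 1` identifies the two sets outright: an
inversion sequence is a parent function of an increasing tree, and a value occurring three
times is exactly a vertex with three children. -/

/-- A 0-1-2 increasing tree on the labels `{0, 1, …, n}` is a rooted unordered
tree in which every child has a larger label than its parent and every vertex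
has at most two children.  Since labels strictly increase from the root, the
root is `0` and the tree is uniquely determined by the parent function, which
assigns to each vertex `i + 1` (for `i = 0, …, n-1`) a parent in `{0, …, i}`;
the degree restriction says every label is the parent of at most two vertices. -/
def IsIncreasing012Tree (n : ℕ) (parent : Fin n → ℕ) : Prop :=
  (∀ i : Fin n, parent i ≤ (i : ℕ)) ∧
    ∀ v : ℕ, Set.ncard {i : Fin n | parent i = v} ≤ 2

theorem Set.exists_lt_lt_of_two_lt_ncard {α : Type*} [LinearOrder α] {s : Set α}
    (hs : s.Finite) (h : 2 < s.ncard) :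
    ∃ a ∈ s, ∃ b ∈ s, ∃ c ∈ s, a < b ∧ b < c := by
  have hcard : hs.toFinset.card = s.ncard := (Set.ncard_eq_toFinset_card s hs).symm
  let g := hs.toFinset.orderEmbOfFin rfl
  have hg (i : Fin hs.toFinset.card) : g i ∈ s :=
    hs.mem_toFinset.mp (hs.toFinset.orderEmbOfFin_mem rfl i)
  exact ⟨g ⟨0, by omega⟩, hg _, g ⟨1, by omega⟩, hg _, g ⟨2, by omega⟩, hg _,
    g.strictMono (by simp [Fin.lt_def]), g.strictMono (by simp [Fin.lt_def])⟩

theorem exists_lt_lt_eq_eq_iff_exists_two_lt_ncard {α β : Type*} [LinearOrder α] [Finite α]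
    (f : α → β) :
    (∃ i j k, i < j ∧ j < k ∧ f i = f j ∧ f j = f k) ↔ ∃ v, 2 < {i | f i = v}.ncard := by
  constructor
  · rintro ⟨i, j, k, hij, hjk, hfij, hfjk⟩
    refine ⟨f j, (Set.two_lt_ncard_iff (Set.toFinite _)).mpr ?_⟩
    exact ⟨i, j, k, hfij, rfl, hfjk.symm, hij.ne, (hij.trans hjk).ne, hjk.ne⟩
  · rintro ⟨v, hv⟩
    obtain ⟨a, ha, b, hb, c, hc, hab, hbc⟩ :=
      Set.exists_lt_lt_of_two_lt_ncard (Set.toFinite _) hv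
    exact ⟨a, b, c, hab, hbc, ha.trans hb.symm, hb.trans hc.symm⟩

/-- The number of 000-avoiding inversion sequences of length `n` equals the
number of 0-1-2 increasing trees with `n + 1` vertices labeled `0, …, n`. -/
theorem inv_avoid_000_eq_increasing_trees (n : ℕ) :
    Set.ncard {e : Fin n → ℕ | (∀ i : Fin n, e i ≤ (i : ℕ)) ∧
      ¬ ∃ i j k : Fin n, i < j ∧ j < k ∧ e i = e j ∧ e j = e k} =
    Set.ncard {parent : Fin n → ℕ | IsIncreasing012Tree n parent} := by
  congr 1
  ext e
  simp only [Set.mem_ofPred_eq, IsIncreasing012Tree, exists_lt_lt_eq_eq_iff_exists_two_lt_ncard,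
    not_exists, not_lt]
end

section
/- Let E_{n,k} be the number of 000-avoiding inversion sequences of length n with exactly k distinct entries. Then E_{n,k} = (n-k+1)·E_{n-1,k-1} + (2k-n+1)·E_{n-1,k} for n ≥ 1, with E_{0,0} = 1 and E_{n,k} = 0 for k > n or k < ⌈n/2⌉. -/
/-- `E n k` is the number of 000-avoiding inversion sequences of length `n`
with exactly `k` distinct entries. -/
noncomputable def E (n k : ℕ) : ℕ :=
  Set.ncard {e : Fin n → ℕ | (∀ i : Fin n, e i ≤ (i : ℕ)) ∧
    (¬ ∃ i j l : Fin n, i < j ∧ j < l ∧ e i = e j ∧ e j = e l) ∧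
    (Set.range e).ncard = k}

/-!
Avoiding 000 means that every value occurs at most twice. Remove the last entry `v` of a
sequence counted by `E (m + 1) k`. If `v` is new, the rest is counted by `E m (k - 1)` and `v`
can be any of the `m + 1 - (k - 1)` values in `{0, …, m}` it does not use. If `v` repeats an
earlier value, that value occurs exactly once in the rest, which is counted by `E m k`; and among
the `k` values of such a sequence, each occurring once or twice in `m` positions, exactly
`2k - m` occur once. The same count gives `⌈n/2⌉ ≤ k ≤ n` for every sequence counted by
`E n k`.
-/

open Finset

theorem Finset.card_eq_sum_card_of_snoc_mem_iff {α : Type*} {m : ℕ}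
    {S : Finset (Fin (m + 1) → α)} {T : Finset (Fin m → α)} {V : (Fin m → α) → Finset α}
    (h : ∀ f v, Fin.snoc f v ∈ S ↔ f ∈ T ∧ v ∈ V f) :
    #S = ∑ f ∈ T, #(V f) := by
  rw [← card_sigma]
  refine card_nbij' (fun e => ⟨Fin.init e, e (Fin.last m)⟩) (fun p => Fin.snoc p.1 p.2)
    (fun e he => ?_) (fun p hp => ?_) (fun e _ => Fin.snoc_init_self e) (fun p _ => ?_)
  · rw [mem_coe, ← Fin.snoc_init_self e, h] at he
    simpa using he
  · simpa [h] using hp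
  · simp

namespace InvSeq

section Multiplicity

variable {α : Type*} [DecidableEq α] {n : ℕ}

def mult (e : Fin n → α) (v : α) : ℕ := #{i | e i = v}

theorem mult_snoc (f : Fin n → α) (v w : α) :
    mult (Fin.snoc f v : Fin (n + 1) → α) w = mult f w + if v = w then 1 else 0 := by
  simp only [mult, card_filter, Fin.sum_univ_castSucc, Fin.snoc_castSucc, Fin.snoc_last]

theorem image_snoc (f : Fin n → α) (v : α) :
    univ.image (Fin.snoc f v : Fin (n + 1) → α) = insert v (univ.image f) := by
  apply coe_injective
  simp

theorem sum_mult_image (e : Fin n → α) : ∑ v ∈ univ.image e, mult e v = n := by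
  simpa [mult] using (card_eq_sum_card_image e univ).symm

theorem one_le_mult {e : Fin n → α} {v : α} (hv : v ∈ univ.image e) : 1 ≤ mult e v := by
  obtain ⟨i, -, rfl⟩ := mem_image.1 hv
  exact card_pos.2 ⟨i, by simp⟩

theorem mult_eq_zero {e : Fin n → α} {v : α} (hv : v ∉ univ.image e) : mult e v = 0 := by
  simpa [mult] using hv

theorem not_exists_three_eq_iff_mult_le_two (e : Fin n → α) :
    (¬ ∃ i j l : Fin n, i < j ∧ j < l ∧ e i = e j ∧ e j = e l) ↔ ∀ v, mult e v ≤ 2 := by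
  refine not_iff_comm.1 ⟨fun h => ?_, ?_⟩
  · push Not at h
    obtain ⟨v, hv⟩ := h
    set s : Finset (Fin n) := {i | e i = v}
    have hs : ∀ a, e (s.orderEmbOfFin rfl a) = v := fun a =>
      (mem_filter.1 (s.orderEmbOfFin_mem rfl a)).2
    replace hv : 2 < #s := hv
    refine ⟨s.orderEmbOfFin rfl ⟨0, by omega⟩, s.orderEmbOfFin rfl ⟨1, by omega⟩,
      s.orderEmbOfFin rfl ⟨2, by omega⟩, by simp, by simp, by rw [hs, hs], by rw [hs, hs]⟩
  · rintro ⟨i, j, l, hij, hjl, hi, hj⟩ h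
    have : ({i, j, l} : Finset (Fin n)) ⊆ univ.filter (e · = e l) := by
      intro x hx
      simp only [mem_insert, mem_singleton] at hx
      rcases hx with rfl | rfl | rfl <;> simp [hi, hj]
    have := (card_le_card this).trans (h (e l))
    rw [card_insert_of_notMem (by simp [hij.ne, (hij.trans hjl).ne]),
      card_pair hjl.ne] at this
    omega

theorem card_mult_eq_one_add_eq_two_mul_card_image {e : Fin n → α} (he : ∀ v, mult e v ≤ 2) :
    #{v ∈ univ.image e | mult e v = 1} + n = 2 * #(univ.image e) := by
  have hsplit : ∀ v ∈ univ.image e, (if mult e v = 1 then 1 else 0) + mult e v = 2 := by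
    intro v hv
    have := one_le_mult hv
    have := he v
    split_ifs <;> omega
  have h := sum_congr rfl hsplit
  rw [sum_add_distrib, sum_mult_image, sum_const, smul_eq_mul, ← card_filter] at h
  omega

end Multiplicity

open Classical in
noncomputable def avoid000 (n k : ℕ) : Finset (Fin n → ℕ) :=
  {e ∈ Fintype.piFinset fun i : Fin n => range (i + 1) |
    (∀ v, mult e v ≤ 2) ∧ #(univ.image e) = k}

variable {n m k : ℕ}

theorem mem_avoid000 {e : Fin n → ℕ} :
    e ∈ avoid000 n k ↔ (∀ i, e i ≤ i) ∧ (∀ v, mult e v ≤ 2) ∧ #(univ.image e) = k := by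
  simp [avoid000]

theorem E_eq_card_avoid000 (n k : ℕ) : E n k = #(avoid000 n k) := by
  rw [E, ← Set.ncard_coe_finset]
  congr 1
  ext e
  simp only [Set.mem_ofPred_eq, mem_coe, mem_avoid000, not_exists_three_eq_iff_mult_le_two,
    ← Set.ncard_coe_finset, coe_image, coe_univ, Set.image_univ]

theorem le_and_le_two_mul_of_mem_avoid000 {e : Fin n → ℕ} (he : e ∈ avoid000 n k) :
    k ≤ n ∧ n ≤ 2 * k := by
  obtain ⟨-, hmult, rfl⟩ := mem_avoid000.1 he
  refine ⟨card_image_le.trans_eq (by simp), ?_⟩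
  have := card_mult_eq_one_add_eq_two_mul_card_image hmult
  omega

theorem snoc_mem_avoid000 {f : Fin m → ℕ} {v : ℕ} :
    (Fin.snoc f v : Fin (m + 1) → ℕ) ∈ avoid000 (m + 1) k ↔
      (∀ i, f i ≤ i) ∧ v ≤ m ∧ (∀ w, mult f w + (if v = w then 1 else 0) ≤ 2) ∧
        #(insert v (univ.image f)) = k := by
  simp [mem_avoid000, Fin.forall_fin_succ', mult_snoc, image_snoc, and_assoc]

theorem snoc_mem_avoid000_of_notMem {f : Fin m → ℕ} {v : ℕ} (hv : v ∉ univ.image f)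
    (hk : 1 ≤ k) :
    (Fin.snoc f v : Fin (m + 1) → ℕ) ∈ avoid000 (m + 1) k ↔
      f ∈ avoid000 m (k - 1) ∧ v ∈ range (m + 1) \ univ.image f := by
  have hmult : ∀ w, mult f w + (if v = w then 1 else 0) ≤ 2 ↔ mult f w ≤ 2 := fun w => by
    split_ifs with h
    · simp [← h, mult_eq_zero hv]
    · simp
  have hcard : #(univ.image f) + 1 = k ↔ #(univ.image f) = k - 1 := by omega
  rw [snoc_mem_avoid000, mem_avoid000]
  simp only [hmult, card_insert_of_notMem hv, hcard, mem_sdiff, mem_range, Nat.lt_succ_iff, hv,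
    not_false_eq_true, and_true]
  tauto

theorem snoc_mem_avoid000_of_mem {f : Fin m → ℕ} {v : ℕ} (hv : v ∈ univ.image f) :
    (Fin.snoc f v : Fin (m + 1) → ℕ) ∈ avoid000 (m + 1) k ↔
      f ∈ avoid000 m k ∧ v ∈ {w ∈ univ.image f | mult f w = 1} := by
  have hmult : (∀ w, mult f w + (if v = w then 1 else 0) ≤ 2) ↔
      (∀ w, mult f w ≤ 2) ∧ mult f v = 1 := by
    have := one_le_mult hv
    refine ⟨fun h => ⟨fun w => (Nat.le_add_right _ _).trans (h w), ?_⟩, fun h w => ?_⟩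
    · have := h v
      rw [if_pos rfl] at this
      omega
    · split_ifs with hw
      · subst hw; omega
      · simpa using h.1 w
  obtain ⟨i, -, rfl⟩ := mem_image.1 hv
  rw [snoc_mem_avoid000, mem_avoid000, hmult, insert_eq_of_mem hv]
  simp only [mem_filter, hv, true_and]
  have hbound : (∀ j : Fin m, f j ≤ j) → f i ≤ m := fun h => (h i).trans i.is_lt.le
  tauto

theorem card_avoid000_succ (hk : 1 ≤ k) :
    #(avoid000 (m + 1) k) = ∑ f ∈ avoid000 m (k - 1), #(range (m + 1) \ univ.image f) +
      ∑ f ∈ avoid000 m k, #{w ∈ univ.image f | mult f w = 1} := by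
  rw [← card_filter_add_card_filter_not (fun e => e (Fin.last m) ∉ univ.image (Fin.init e))]
  congr 1 <;> refine card_eq_sum_card_of_snoc_mem_iff fun f v => ?_ <;>
    simp only [mem_filter, Fin.init_snoc, Fin.snoc_last, not_not]
  · by_cases hv : v ∈ univ.image f
    · simp [hv]
    · simp [hv, snoc_mem_avoid000_of_notMem hv hk]
  · by_cases hv : v ∈ univ.image f
    · simp [hv, snoc_mem_avoid000_of_mem hv]
    · simp [hv]

theorem card_range_sdiff_image_of_mem_avoid000 {j : ℕ} {f : Fin m → ℕ}
    (hf : f ∈ avoid000 m j) :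
    (#(range (m + 1) \ univ.image f) : ℤ) = m + 1 - j := by
  have hsub : univ.image f ⊆ range (m + 1) := by
    simp only [subset_iff, mem_image, mem_univ, true_and, mem_range, forall_exists_index]
    rintro _ i rfl
    have := (mem_avoid000.1 hf).1 i
    omega
  have hj := (le_and_le_two_mul_of_mem_avoid000 hf).1
  rw [card_sdiff_of_subset hsub, card_range, (mem_avoid000.1 hf).2.2]
  omega

theorem card_mult_eq_one_of_mem_avoid000 {f : Fin m → ℕ} (hf : f ∈ avoid000 m k) :
    (#{w ∈ univ.image f | mult f w = 1} : ℤ) = 2 * k - m := by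
  have := card_mult_eq_one_add_eq_two_mul_card_image (mem_avoid000.1 hf).2.1
  rw [(mem_avoid000.1 hf).2.2] at this
  omega

end InvSeq

open InvSeq

/-- The recurrence `E_{n,k} = (n-k+1)·E_{n-1,k-1} + (2k-n+1)·E_{n-1,k}` for
`n ≥ 1` (and `k ≥ 1`, so that `k - 1` makes sense), together with the initial
conditions `E_{0,0} = 1` and `E_{n,k} = 0` for `k > n` or `k < ⌈n/2⌉`. -/
theorem E_recurrence :
    (∀ n k : ℕ, 1 ≤ n → 1 ≤ k →
      (E n k : ℤ) = ((n : ℤ) - k + 1) * E (n - 1) (k - 1)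
        + (2 * (k : ℤ) - n + 1) * E (n - 1) k) ∧
    E 0 0 = 1 ∧
    (∀ n k : ℕ, n < k ∨ k < (n + 1) / 2 → E n k = 0) := by
  refine ⟨fun n k hn hk => ?_, ?_, fun n k hnk => ?_⟩
  · obtain ⟨m, rfl⟩ := Nat.exists_eq_add_of_le' hn
    rw [E_eq_card_avoid000, E_eq_card_avoid000, E_eq_card_avoid000, Nat.add_sub_cancel,
      card_avoid000_succ hk]
    push_cast
    rw [sum_congr rfl fun f hf => card_range_sdiff_image_of_mem_avoid000 hf,
      sum_congr rfl fun f hf => card_mult_eq_one_of_mem_avoid000 hf, sum_const, sum_const,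
      Nat.cast_sub hk]
    simp only [nsmul_eq_mul]
    ring
  · simp [E]
  · rw [E_eq_card_avoid000, card_eq_zero, eq_empty_iff_forall_notMem]
    intro e he
    have := le_and_le_two_mul_of_mem_avoid000 he
    omega
end

section
/- An inversion sequence (e_1,...,e_n) avoids the pattern 001 if and only if there exists t ∈ [n] such that e_1 < e_2 < ⋯ < e_t ≥ e_{t+1} ≥ e_{t+2} ≥ ⋯ ≥ e_n. -/
/-!
Reading indices from `0`, the condition `e i ≤ i` forces `e 0 = 0`, so `e` has fixed points;
let `t` be the largest. Avoiding 001 makes the fixed points an initial segment: a first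
non-fixed `k < t` would repeat the value `e k` already taken at the fixed point `e k`, and the
larger value `e t` would complete a 001. After `t` every value is at most `t`, hence repeats the
value of the fixed point it names, so everything later must be weakly smaller.
-/

def Avoids001 {n : ℕ} (e : Fin n → ℕ) : Prop :=
  ¬ ∃ i j k : Fin n, i < j ∧ j < k ∧ e i = e j ∧ e j < e k

namespace Avoids001

variable {n : ℕ} {e : Fin n → ℕ}

theorem apply_le_of_apply_eq (h : Avoids001 e) {i j k : Fin n} (hij : i < j) (hjk : j < k)
    (heq : e i = e j) : e k ≤ e j :=
  not_lt.mp fun hlt => h ⟨i, j, k, hij, hjk, heq, hlt⟩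

theorem eq_self_of_le (h : Avoids001 e) (he : ∀ i : Fin n, e i ≤ i) {j : Fin n}
    (hj : e j = j) (k : Fin n) (hkj : k ≤ j) : e k = k := by
  induction k using WellFoundedLT.induction with
  | ind k ih =>
    by_contra hne
    have hk : e k < k := lt_of_le_of_ne (he k) hne
    set v : Fin n := ⟨e k, hk.trans k.isLt⟩
    have hvk : v < k := hk
    have hv : e v = e k := ih v hvk (hvk.le.trans hkj)
    rcases hkj.lt_or_eq with hkj | rfl
    · have hjk : e j ≤ e k := h.apply_le_of_apply_eq hvk hkj hv
      have hkj' : (k : ℕ) < j := hkj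
      omega
    · exact hne hj

variable {t : Fin n}

theorem apply_le_apply_of_lt (h : Avoids001 e) (hfix : ∀ i ≤ t, e i = i) {j k : Fin n}
    (hjt : e j ≤ t) (htj : t < j) (hjk : j < k) : e k ≤ e j := by
  set i : Fin n := ⟨e j, hjt.trans_lt t.isLt⟩
  have hit : i ≤ t := hjt
  exact h.apply_le_of_apply_eq (hit.trans_lt htj) hjk (hfix i hit)

theorem apply_le_of_lt (h : Avoids001 e) (he : ∀ i : Fin n, e i ≤ i) (hfix : ∀ i ≤ t, e i = i)
    (hnfix : ∀ j, t < j → e j ≠ j) (j : Fin n) (htj : t < j) : e j ≤ t := by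
  induction j using WellFoundedLT.induction with
  | ind j ih =>
    -- At `v := e j` the value `e v ≤ t` repeats a fixed point, and `e j = v` then exceeds it.
    by_contra! hgt
    have hj : e j < j := lt_of_le_of_ne (he j) (hnfix j htj)
    set v : Fin n := ⟨e j, hj.trans j.isLt⟩
    have htv : t < v := hgt
    have hvj : v < j := hj
    have hv : e v ≤ t := ih v hvj htv
    exact absurd (h.apply_le_apply_of_lt hfix hv htv hvj) (not_le.mpr (hv.trans_lt hgt))

theorem exists_unimodal (h : Avoids001 e) (he : ∀ i : Fin n, e i ≤ i) (hn : 1 ≤ n) :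
    ∃ t : Fin n,
      (∀ i j : Fin n, i < j → j ≤ t → e i < e j) ∧
      (∀ i j : Fin n, t ≤ i → i ≤ j → e j ≤ e i) := by
  classical
  set fixed := Finset.univ.filter fun i : Fin n => e i = i
  have h0 : (⟨0, hn⟩ : Fin n) ∈ fixed := by
    simpa [fixed] using he ⟨0, hn⟩
  set t := fixed.max' ⟨_, h0⟩
  have ht : e t = t := (Finset.mem_filter.mp (fixed.max'_mem _)).2
  have hfix : ∀ i ≤ t, e i = i := h.eq_self_of_le he ht
  have hnfix : ∀ j, t < j → e j ≠ j := fun j htj hj =>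
    (fixed.le_max' j (by simpa [fixed] using hj)).not_gt htj
  refine ⟨t, fun i j hij hjt => ?_, fun i j hti hij => ?_⟩
  · rw [hfix i (hij.le.trans hjt), hfix j hjt]
    exact hij
  · rcases hij.lt_or_eq with hij | rfl
    · rcases hti.lt_or_eq with hti | rfl
      · exact h.apply_le_apply_of_lt hfix (h.apply_le_of_lt he hfix hnfix i hti) hti hij
      · exact ht ▸ h.apply_le_of_lt he hfix hnfix j hij
    · exact le_rfl

end Avoids001

theorem avoids001_of_unimodal {n : ℕ} {e : Fin n → ℕ} {t : Fin n}
    (hinc : ∀ i j : Fin n, i < j → j ≤ t → e i < e j)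
    (hdec : ∀ i j : Fin n, t ≤ i → i ≤ j → e j ≤ e i) : Avoids001 e := by
  rintro ⟨i, j, k, hij, hjk, heq, hlt⟩
  rcases le_or_gt j t with hjt | htj
  · exact (hinc i j hij hjt).ne heq
  · exact (hdec j k htj.le hjk.le).not_gt hlt

/-- An inversion sequence `(e_1, …, e_n)` avoids the pattern 001 if and only if
there is a `t ∈ [n]` such that `e_1 < e_2 < ⋯ < e_t ≥ e_{t+1} ≥ ⋯ ≥ e_n`. -/
theorem avoid_001_characterization (n : ℕ) (hn : 1 ≤ n) (e : Fin n → ℕ)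
    (he : ∀ i : Fin n, e i ≤ (i : ℕ)) :
    (¬ ∃ i j k : Fin n, i < j ∧ j < k ∧ e i = e j ∧ e j < e k) ↔
      ∃ t : Fin n,
        (∀ i j : Fin n, i < j → j ≤ t → e i < e j) ∧
        (∀ i j : Fin n, t ≤ i → i ≤ j → e j ≤ e i) :=
  ⟨fun h => Avoids001.exists_unimodal h he hn,
    fun ⟨_, hinc, hdec⟩ => avoids001_of_unimodal hinc hdec⟩
end

section
/- The number of 011-avoiding inversion sequences of length n with exactly k zeros equals the Stirling number of the second kind S(n,k), the number of set partitions of an n-element set into k nonempty blocks. Consequently, the total number of 011-avoiding inversion sequences of length n is the Bell number B_n. -/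
/-!
Since `e 0 = 0`, an inversion sequence avoids 011 exactly when its nonzero entries are distinct.
Such a sequence encodes a set partition: `e i = 0` opens a new block, and `e i = j + 1`
(`Link e j i`) puts `i` into the block of `j`, where `j` is the largest element of that block
below `i`. Distinctness of the nonzero entries means that each position is linked to at most one
later position, so every block is a single chain of links starting at a zero of `e`. Following the
links backwards (`root`) recovers the block of a position, and the blocks are counted by the zeros.
-/

open Finset Relation

theorem Finpartition.ext_part {α : Type*} [DecidableEq α] {s : Finset α} {P Q : Finpartition s}
    (h : ∀ a ∈ s, P.part a = Q.part a) : P = Q := by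
  suffices key : ∀ {P Q : Finpartition s}, (∀ a ∈ s, P.part a = Q.part a) → P.parts ⊆ Q.parts from
    Finpartition.ext <| (key h).antisymm (key fun a ha => (h a ha).symm)
  intro P Q h t ht
  obtain ⟨a, ha, rfl⟩ := P.part_surjOn ht
  rw [h a ha]
  exact Q.part_mem.2 ha

namespace InversionSeq

variable {n : ℕ} {e : Fin n → ℕ} {i j : Fin n}

theorem not_exists_011_iff_injOn (hle : ∀ i, e i ≤ i) :
    (¬ ∃ i j l : Fin n, i < j ∧ j < l ∧ e i < e j ∧ e j = e l) ↔
      Set.InjOn e {i | e i ≠ 0} := by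
  constructor
  · intro h011 j (hj : e j ≠ 0) l (hl : e l ≠ 0) hjl
    by_contra hne
    wlog hlt : j < l generalizing j l
    · exact this hl hj hjl.symm (Ne.symm hne) (lt_of_le_of_ne (not_lt.1 hlt) (Ne.symm hne))
    have hj0 : 0 < (j : ℕ) := by have := hle j; omega
    have he0 : e ⟨0, j.pos⟩ = 0 := Nat.le_zero.1 (hle _)
    exact h011 ⟨⟨0, j.pos⟩, j, l, Fin.lt_def.2 hj0, hlt, by omega, hjl⟩
  · rintro hinj ⟨i, j, l, -, hjl, hij, heq⟩
    exact hjl.ne (hinj (show e j ≠ 0 by omega) (show e l ≠ 0 by omega) heq)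

def Link (e : Fin n → ℕ) (j i : Fin n) : Prop := e i = j + 1

/-- The guard `e i ≤ i`, automatic for inversion sequences, makes the recursion terminate. -/
def root (e : Fin n → ℕ) (i : Fin n) : Fin n :=
  if h : 0 < e i ∧ e i ≤ i then root e ⟨e i - 1, by omega⟩ else i
termination_by i.val

theorem root_of_eq_zero (h : e i = 0) : root e i = i := by
  rw [root, dif_neg (by omega)]

theorem root_eq_of_link (hle : ∀ i, e i ≤ i) (h : Link e j i) : root e i = root e j := by
  unfold Link at h
  rw [root, dif_pos ⟨by omega, hle i⟩]
  congr
  simp [h]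

theorem apply_root_eq_zero (hle : ∀ i, e i ≤ i) (i : Fin n) : e (root e i) = 0 := by
  rw [root]
  split
  · exact apply_root_eq_zero hle _
  · have := hle i
    omega
termination_by i.val

theorem reflTransGen_link_root (e : Fin n → ℕ) (i : Fin n) :
    ReflTransGen (Link e) (root e i) i := by
  rw [root]
  split
  · exact (reflTransGen_link_root e _).tail (by simp only [Link]; omega)
  · exact .refl
termination_by i.val

theorem le_of_reflTransGen_link (hle : ∀ i, e i ≤ i) (h : ReflTransGen (Link e) j i) : j ≤ i := by
  induction h with
  | refl => exact le_rfl
  | @tail k l _ hkl ih =>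
    have := hle l
    unfold Link at hkl
    exact ih.trans (Fin.le_def.2 (by omega))

theorem rightUnique_link (hinj : Set.InjOn e {i | e i ≠ 0}) : Relator.RightUnique (Link e) :=
  fun j i i' (hi : e i = j + 1) (hi' : e i' = j + 1) =>
    hinj (by simp [hi]) (by simp [hi']) (hi.trans hi'.symm)

/-- Both `j` and `i` are reached from their common root along a single chain of links. -/
theorem lt_of_root_eq (hle : ∀ i, e i ≤ i) (hinj : Set.InjOn e {i | e i ≠ 0})
    (hroot : root e j = root e i) (hji : j < i) : (j : ℕ) < e i := by
  rcases (reflTransGen_link_root e j).total_of_right_unique (rightUnique_link hinj)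
    (hroot ▸ reflTransGen_link_root e i) with hji' | hij
  · obtain ⟨k, hjk, hki⟩ := hji'.cases_tail.resolve_left hji.ne'
    have := le_of_reflTransGen_link hle hjk
    change e i = k + 1 at hki
    rw [Fin.le_def] at this
    omega
  · exact absurd (le_of_reflTransGen_link hle hij) (not_le.2 hji)

noncomputable def toFinpartition (e : Fin n → ℕ) : Finpartition (univ : Finset (Fin n)) := by
  classical exact Finpartition.ofSetoid (Setoid.ker (root e))

theorem mem_part_toFinpartition : j ∈ (toFinpartition e).part i ↔ root e i = root e j := by
  classical exact Finpartition.mem_part_ofSetoid_iff_rel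

theorem card_parts_toFinpartition (hle : ∀ i, e i ≤ i) :
    #(toFinpartition e).parts = {i | e i = 0}.ncard := by
  rw [← Set.ncard_coe_finset]
  refine (Set.BijOn.ncard_eq ⟨fun i _ => (toFinpartition e).part_mem.2 (mem_univ i), ?_, ?_⟩).symm
  · intro z hz z' hz' (h : (toFinpartition e).part z = (toFinpartition e).part z')
    have := mem_part_toFinpartition.1 (h ▸ (toFinpartition e).mem_part (mem_univ z'))
    rwa [root_of_eq_zero hz, root_of_eq_zero hz'] at this
  · intro t ht
    obtain ⟨i, -, rfl⟩ := (toFinpartition e).part_surjOn ht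
    refine ⟨root e i, apply_root_eq_zero hle i, Finset.ext fun j => ?_⟩
    rw [mem_part_toFinpartition, mem_part_toFinpartition, root_of_eq_zero (apply_root_eq_zero hle i)]

def ofFinpartition (P : Finpartition (univ : Finset (Fin n))) (i : Fin n) : ℕ :=
  {j ∈ P.part i | j < i}.sup fun j => (j : ℕ) + 1

variable {P : Finpartition (univ : Finset (Fin n))}

theorem ofFinpartition_le (P : Finpartition (univ : Finset (Fin n))) (i : Fin n) :
    ofFinpartition P i ≤ i :=
  Finset.sup_le fun _ hj => Fin.lt_def.1 (mem_filter.1 hj).2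

theorem lt_ofFinpartition (hj : j ∈ P.part i) (hji : j < i) : (j : ℕ) < ofFinpartition P i :=
  Finset.le_sup (f := fun j : Fin n => (j : ℕ) + 1) (mem_filter.2 ⟨hj, hji⟩)

theorem part_eq_of_link (h : Link (ofFinpartition P) j i) : P.part j = P.part i := by
  change ofFinpartition P i = j + 1 at h
  have hne : {k ∈ P.part i | k < i}.Nonempty :=
    nonempty_iff_ne_empty.2 fun h0 => by simp [ofFinpartition, h0] at h
  obtain ⟨k, hk, hsup⟩ := exists_mem_eq_sup _ hne fun k : Fin n => (k : ℕ) + 1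
  obtain rfl : k = j := Fin.ext (by rw [ofFinpartition] at h; omega)
  exact P.part_eq_of_mem (P.part_mem.2 (mem_univ i)) (mem_filter.1 hk).1

theorem part_eq_of_reflTransGen_link (h : ReflTransGen (Link (ofFinpartition P)) j i) :
    P.part j = P.part i := by
  induction h with
  | refl => rfl
  | tail _ hlink ih => exact ih.trans (part_eq_of_link hlink)

theorem injOn_ofFinpartition (P : Finpartition (univ : Finset (Fin n))) :
    Set.InjOn (ofFinpartition P) {i | ofFinpartition P i ≠ 0} := by
  intro i (hi : ofFinpartition P i ≠ 0) j (hj : ofFinpartition P j ≠ 0) hij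
  by_contra hne
  wlog hlt : i < j generalizing i j
  · exact this hj hi hij.symm (Ne.symm hne) (lt_of_le_of_ne (not_lt.1 hlt) (Ne.symm hne))
  have hle := ofFinpartition_le P i
  obtain ⟨k, hk⟩ := Nat.exists_eq_add_one_of_ne_zero hi
  let p : Fin n := ⟨k, by omega⟩
  have hpart : P.part i = P.part j :=
    (part_eq_of_link (j := p) hk).symm.trans (part_eq_of_link (j := p) (hij.symm.trans hk))
  have := lt_ofFinpartition (hpart ▸ P.mem_part (mem_univ i)) hlt
  omega

theorem root_ofFinpartition_mem_part : root (ofFinpartition P) i ∈ P.part i :=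
  (P.mem_part_iff_part_eq_part (mem_univ _) (mem_univ i)).2
    (part_eq_of_reflTransGen_link (reflTransGen_link_root _ i))

theorem root_ofFinpartition_le (hj : j ∈ P.part i) : root (ofFinpartition P) i ≤ j := by
  by_contra! hlt
  rw [← part_eq_of_reflTransGen_link (reflTransGen_link_root _ i)] at hj
  have := lt_ofFinpartition hj hlt
  rw [apply_root_eq_zero (ofFinpartition_le P)] at this
  omega

theorem root_ofFinpartition_eq_iff :
    root (ofFinpartition P) i = root (ofFinpartition P) j ↔ P.part i = P.part j := by
  refine ⟨fun h => ?_, fun h => le_antisymm ?_ ?_⟩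
  · rw [← part_eq_of_reflTransGen_link (reflTransGen_link_root _ i), h,
      part_eq_of_reflTransGen_link (reflTransGen_link_root _ j)]
  · exact root_ofFinpartition_le (h ▸ root_ofFinpartition_mem_part)
  · exact root_ofFinpartition_le (h.symm ▸ root_ofFinpartition_mem_part)

theorem toFinpartition_ofFinpartition (P : Finpartition (univ : Finset (Fin n))) :
    toFinpartition (ofFinpartition P) = P := by
  refine Finpartition.ext_part fun i _ => Finset.ext fun j => ?_
  rw [mem_part_toFinpartition, root_ofFinpartition_eq_iff,
    P.mem_part_iff_part_eq_part (mem_univ j) (mem_univ i), eq_comm]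

theorem ofFinpartition_toFinpartition (hle : ∀ i, e i ≤ i) (hinj : Set.InjOn e {i | e i ≠ 0}) :
    ofFinpartition (toFinpartition e) = e := by
  funext i
  refine le_antisymm (Finset.sup_le fun j hj => ?_) ?_
  · rw [mem_filter, mem_part_toFinpartition] at hj
    exact lt_of_root_eq hle hinj hj.1.symm hj.2
  · obtain h0 | hpos := Nat.eq_zero_or_pos (e i)
    · exact h0 ▸ Nat.zero_le _
    · have hi := hle i
      let p : Fin n := ⟨e i - 1, by omega⟩
      have hlink : Link e p i := by simp only [Link, p]; omega
      calc e i = p + 1 := hlink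
        _ ≤ ofFinpartition (toFinpartition e) i :=
          lt_ofFinpartition (mem_part_toFinpartition.2 (root_eq_of_link hle hlink))
            (Fin.lt_def.2 (by simp only [p]; omega))

theorem ncard_setOf_toFinpartition (p : Finpartition (univ : Finset (Fin n)) → Prop) :
    {e : Fin n → ℕ | (∀ i, e i ≤ i) ∧ Set.InjOn e {i | e i ≠ 0} ∧ p (toFinpartition e)}.ncard =
      {P | p P}.ncard := by
  refine Set.ncard_congr (fun e _ => toFinpartition e) (fun e he => he.2.2) ?_ fun P hP => ?_
  · rintro e e' ⟨hle, hinj, -⟩ ⟨hle', hinj', -⟩ h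
    rw [← ofFinpartition_toFinpartition hle hinj, h, ofFinpartition_toFinpartition hle' hinj']
  · refine ⟨ofFinpartition P, ⟨ofFinpartition_le P, injOn_ofFinpartition P, ?_⟩,
      toFinpartition_ofFinpartition P⟩
    rwa [toFinpartition_ofFinpartition]

end InversionSeq

open InversionSeq

/-- The number of 011-avoiding inversion sequences of length `n` with exactly
`k` zeros equals the Stirling number of the second kind `S(n,k)` (the number
of set partitions of an `n`-element set into `k` nonempty blocks);
consequently, the total number of 011-avoiding inversion sequences of length
`n` is the Bell number `B_n` (the number of set partitions of an `n`-element
set). -/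
theorem inv_avoid_011_stirling_bell (n : ℕ) :
    (∀ k : ℕ,
      Set.ncard {e : Fin n → ℕ | (∀ i : Fin n, e i ≤ (i : ℕ)) ∧
        (¬ ∃ i j l : Fin n, i < j ∧ j < l ∧ e i < e j ∧ e j = e l) ∧
        Set.ncard {i : Fin n | e i = 0} = k} =
      Set.ncard {P : Finpartition (Finset.univ : Finset (Fin n)) |
        P.parts.card = k}) ∧
    Set.ncard {e : Fin n → ℕ | (∀ i : Fin n, e i ≤ (i : ℕ)) ∧
      ¬ ∃ i j l : Fin n, i < j ∧ j < l ∧ e i < e j ∧ e j = e l} =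
    Nat.card (Finpartition (Finset.univ : Finset (Fin n))) := by
  refine ⟨fun k => ?_, ?_⟩
  · rw [← ncard_setOf_toFinpartition (·.parts.card = k)]
    congr 1
    ext e
    simp only [Set.mem_ofPred_eq]
    refine and_congr_right fun hle => and_congr (not_exists_011_iff_injOn hle) ?_
    rw [card_parts_toFinpartition hle]
  · rw [← Set.ncard_univ, ← Set.ofPred_true, ← ncard_setOf_toFinpartition fun _ => True]
    congr 1
    ext e
    simp only [Set.mem_ofPred_eq, and_true]
    exact and_congr_right not_exists_011_iff_injOn
end

section
/- For all n ≥ 1, the number of inversion sequences of length n avoiding the pattern 101 equals the number avoiding the pattern 110. -/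
/-!
Both counts are taken more generally over lists `e` with `e i < b i` for a nondecreasing bound
list `b`; inversion sequences of length `n` are those bounded by `[1, …, n]`.

Let `M` be the maximum of `e`, occurring `m` times and first at position `p`. If `e` avoids 101,
its copies of `M` are consecutive, `e = P M^m Q`; if `e` avoids 110, all copies after the first
come at the end, `e = P M Q M^(m-1)`. In both cases deleting the copies of `M` leaves a list
`w = P Q` avoiding the same pattern and bounded by the first `n - m` entries of `b` capped at `M`,
and `(M, m, p, w)` determines `e`. The triples `(M, m, p)` that occur do not depend on the
pattern, so both counts satisfy the same recursion in `b`.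
-/

open List

theorem cons_sublist_of_cons_sublist_append {α : Type*} {a : α} {l u v : List α} (ha : a ∉ u)
    (h : a :: l <+ u ++ v) : a :: l <+ v := by
  obtain ⟨l₁, l₂, hl, h₁, h₂⟩ := sublist_append_iff.mp h
  cases l₁ with
  | nil => simpa [hl] using h₂
  | cons b l₁ =>
    obtain ⟨rfl, -⟩ := cons.inj hl
    exact absurd (h₁.subset mem_cons_self) ha

theorem sublist_ofFn_iff {α : Type*} {n : ℕ} (f : Fin n → α) (a b c : α) :
    [a, b, c] <+ ofFn f ↔ ∃ i j k : Fin n, i < j ∧ j < k ∧ f i = a ∧ f j = b ∧ f k = c := by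
  constructor
  · intro h
    obtain ⟨is, heq, hpw⟩ := sublist_eq_map_getElem h
    match is, heq, hpw with
    | [i, j, k], heq, hpw =>
      simp only [Fin.getElem_fin, List.getElem_ofFn, map_cons, map_nil, cons.injEq, and_true,
        pairwise_cons, mem_cons, not_mem_nil, or_false, forall_eq_or_imp, forall_eq,
        IsEmpty.forall_iff, implies_true, Pairwise.nil, and_self] at heq hpw
      refine ⟨Fin.cast (by simp) i, Fin.cast (by simp) j, Fin.cast (by simp) k, ?_⟩
      obtain ⟨rfl, rfl, rfl⟩ := heq
      exact ⟨hpw.1.1, hpw.2, rfl, rfl, rfl⟩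
  · rintro ⟨i, j, k, hij, hjk, rfl, rfl, rfl⟩
    have := map_getElem_sublist (l := ofFn f) (is := [i, j, k].map (Fin.cast length_ofFn.symm))
      (by simp [hij, hjk, hij.trans hjk])
    simpa using this

theorem forall₂_ofFn_iff {α β : Type*} {R : α → β → Prop} {n : ℕ} {f : Fin n → α}
    {g : Fin n → β} : Forall₂ R (ofFn f) (ofFn g) ↔ ∀ i, R (f i) (g i) := by
  simp [forall₂_iff_get, Fin.forall_iff]

theorem forall₂_of_forall_mem {α β : Type*} {R : α → β → Prop} {v : List α} {l : List β}
    (hlen : v.length = l.length) (h : ∀ x ∈ v, ∀ y ∈ l, R x y) : Forall₂ R v l :=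
  forall₂_iff_get.mpr ⟨hlen, fun _ _ _ => h _ (get_mem _ _) _ (get_mem _ _)⟩

theorem forall₂_append_iff_of_forall_mem_drop {α β : Type*} {R : α → β → Prop}
    {u v : List α} {b : List β} (hv : ∀ x ∈ v, ∀ y ∈ b.drop u.length, R x y)
    (hlen : u.length + v.length = b.length) :
    Forall₂ R (u ++ v) b ↔ Forall₂ R u (b.take u.length) := by
  refine ⟨fun h => by simpa using forall₂_take u.length h, fun h => ?_⟩
  rw [← take_append_drop u.length b]
  exact rel_append h (forall₂_of_forall_mem (by simp; omega) hv)

theorem lt_of_forall₂_lt_cons {α : Type*} [Preorder α] {a : α} {s l : List α}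
    (h : Forall₂ (· < ·) (a :: s) l) (hl : l.Pairwise (· ≤ ·)) : ∀ y ∈ l, a < y := by
  obtain ⟨y₀, l, ha, -, rfl⟩ := forall₂_cons_left_iff.mp h
  intro y hy
  rcases mem_cons.mp hy with rfl | hy
  exacts [ha, ha.trans_le (rel_of_pairwise_cons hl hy)]

inductive Pattern
  | p101
  | p110

namespace Pattern

def Matches : Pattern → ℕ → ℕ → ℕ → Prop
  | p101, a, b, c => b < a ∧ a = c
  | p110, a, b, c => a = b ∧ c < b

def Occurs (π : Pattern) (l : List ℕ) : Prop :=
  ∃ a b c, π.Matches a b c ∧ [a, b, c] <+ l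

theorem Occurs.mono {π : Pattern} {l l' : List ℕ} (h : l <+ l') : π.Occurs l → π.Occurs l' := by
  rintro ⟨a, b, c, hm, hs⟩
  exact ⟨a, b, c, hm, hs.trans h⟩

theorem occurs_ofFn_iff {π : Pattern} {n : ℕ} (f : Fin n → ℕ) :
    π.Occurs (ofFn f) ↔ ∃ i j k : Fin n, i < j ∧ j < k ∧ π.Matches (f i) (f j) (f k) := by
  simp only [Occurs, sublist_ofFn_iff]
  constructor
  · rintro ⟨a, b, c, hm, i, j, k, hij, hjk, rfl, rfl, rfl⟩
    exact ⟨i, j, k, hij, hjk, hm⟩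
  · rintro ⟨i, j, k, hij, hjk, hm⟩
    exact ⟨_, _, _, hm, i, j, k, hij, hjk, rfl, rfl, rfl⟩

def arrange : Pattern → List ℕ → List ℕ → List ℕ
  | p101, r, q => r ++ q
  | p110, r, q => q ++ r

theorem arrange_perm (π : Pattern) (r q : List ℕ) : π.arrange r q ~ r ++ q := by
  cases π
  · rfl
  · exact perm_append_comm

theorem filter_arrange (π : Pattern) (f : ℕ → Bool) (r q : List ℕ) :
    (π.arrange r q).filter f = π.arrange (r.filter f) (q.filter f) := by
  cases π <;> simp [arrange]

theorem arrange_nil_left (π : Pattern) (q : List ℕ) : π.arrange [] q = q := by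
  cases π <;> simp [arrange]

def insertMax (π : Pattern) (M m p : ℕ) (w : List ℕ) : List ℕ :=
  take p w ++ M :: π.arrange (replicate (m - 1) M) (drop p w)

end Pattern

open Pattern

def maxProfile (e : List ℕ) : ℕ × ℕ × ℕ :=
  let M := e.max?.getD 0
  (M, e.count M, e.idxOf M)

def reducedBound (b : List ℕ) (M m : ℕ) : List ℕ :=
  (b.take (b.length - m)).map (min M)

def Admissible (b : List ℕ) (M m p : ℕ) : Prop :=
  1 ≤ m ∧ p + m ≤ b.length ∧ ∀ y ∈ b.drop p, M < y

theorem pairwise_reducedBound {b : List ℕ} (hb : b.Pairwise (· ≤ ·)) (M m : ℕ) :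
    (reducedBound b M m).Pairwise (· ≤ ·) :=
  (hb.sublist (take_sublist _ _)).map _ fun _ _ h => min_le_min_left M h

theorem forall₂_lt_reducedBound_iff {b w : List ℕ} {M m : ℕ} :
    Forall₂ (· < ·) w (reducedBound b M m) ↔
      (∀ x ∈ w, x < M) ∧ Forall₂ (· < ·) w (b.take (b.length - m)) := by
  simp only [reducedBound, forall₂_map_right_iff, lt_min_iff]
  exact forall₂_and_left _ _

namespace Pattern

variable {π : Pattern} {M m p : ℕ} {w : List ℕ}

theorem le_of_mem_insertMax (hw : ∀ x ∈ w, x < M) {x : ℕ} (hx : x ∈ π.insertMax M m p w) :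
    x ≤ M := by
  rw [insertMax, mem_append, mem_cons, (π.arrange_perm _ _).mem_iff, mem_append,
    mem_replicate] at hx
  rcases hx with hx | rfl | ⟨-, rfl⟩ | hx
  · exact (hw x (take_subset _ _ hx)).le
  · rfl
  · rfl
  · exact (hw x (drop_subset _ _ hx)).le

theorem filter_insertMax (hw : ∀ x ∈ w, x < M) :
    (π.insertMax M m p w).filter (· < M) = w := by
  have hfw : ∀ l : List ℕ, l ⊆ w → l.filter (· < M) = l := fun l hl =>
    filter_eq_self.mpr fun x hx => by simpa using hw x (hl hx)
  rw [insertMax, filter_append, filter_cons_of_neg (by simp), filter_arrange,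
    hfw _ (take_subset _ _), hfw _ (drop_subset _ _), filter_eq_nil_iff.mpr (by simp),
    arrange_nil_left, take_append_drop]

theorem injOn_insertMax : Set.InjOn (π.insertMax M m p) {w | ∀ x ∈ w, x < M} :=
  fun w hw w' hw' h => by rw [← filter_insertMax hw, h, filter_insertMax hw']

theorem length_insertMax (hm : 1 ≤ m) (hp : p ≤ w.length) :
    (π.insertMax M m p w).length = w.length + m := by
  simp only [insertMax, length_append, length_cons, (π.arrange_perm _ _).length_eq,
    length_take, length_drop, length_replicate]
  omega

theorem maxProfile_insertMax (hw : ∀ x ∈ w, x < M) (hm : 1 ≤ m) (hp : p ≤ w.length) :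
    maxProfile (π.insertMax M m p w) = (M, m, p) := by
  have hMw : M ∉ w := fun h => lt_irrefl M (hw M h)
  have hmax : (π.insertMax M m p w).max? = some M :=
    max?_eq_some_iff.mpr ⟨by simp [insertMax], fun x hx => le_of_mem_insertMax hw hx⟩
  simp only [maxProfile, hmax, Option.getD_some, Prod.mk.injEq, true_and]
  constructor
  · rw [insertMax, count_append, count_cons_self, (π.arrange_perm _ _).count_eq, count_append,
      count_replicate_self, count_eq_zero.mpr (fun h => hMw (take_subset _ _ h)),
      count_eq_zero.mpr (fun h => hMw (drop_subset _ _ h))]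
    omega
  · rw [insertMax, idxOf_append_of_notMem (fun h => hMw (take_subset _ _ h)), idxOf_cons_self,
      length_take]
    omega

theorem exists_eq_replicate_append_of_not_occurs {r : List ℕ} (hav : ¬ p101.Occurs (M :: r))
    (hr : ∀ x ∈ r, x ≤ M) : ∃ j q, (∀ x ∈ q, x < M) ∧ r = replicate j M ++ q := by
  induction r with
  | nil => exact ⟨0, [], by simp⟩
  | cons y r ih =>
    rcases (hr y mem_cons_self).lt_or_eq with hy | rfl
    · refine ⟨0, y :: r, fun x hx => (hr x hx).lt_of_ne ?_, rfl⟩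
      rintro rfl
      rcases mem_cons.mp hx with rfl | hx
      · exact lt_irrefl _ hy
      · exact hav ⟨x, y, x, ⟨hy, rfl⟩, by simpa using hx⟩
    · obtain ⟨j, q, hq, rfl⟩ := ih (fun h => hav (h.mono (by simp)))
        (fun x hx => hr x (mem_cons_of_mem _ hx))
      exact ⟨j + 1, q, hq, rfl⟩

theorem exists_eq_append_replicate_of_not_occurs {r : List ℕ} (hav : ¬ p110.Occurs (M :: r))
    (hr : ∀ x ∈ r, x ≤ M) : ∃ j q, (∀ x ∈ q, x < M) ∧ r = q ++ replicate j M := by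
  induction r with
  | nil => exact ⟨0, [], by simp⟩
  | cons y r ih =>
    rcases (hr y mem_cons_self).lt_or_eq with hy | rfl
    · obtain ⟨j, q, hq, rfl⟩ := ih (fun h => hav (h.mono (by simp)))
        (fun x hx => hr x (mem_cons_of_mem _ hx))
      refine ⟨j, y :: q, ?_, rfl⟩
      simpa [hy] using hq
    · refine ⟨r.length + 1, [], by simp, eq_replicate_iff.mpr ⟨rfl, fun x hx => ?_⟩⟩
      by_contra hxy
      have hxr : x ∈ r := (mem_cons.mp hx).resolve_left hxy
      exact hav ⟨y, y, x, ⟨rfl, (hr x hx).lt_of_ne hxy⟩, by simpa using hxr⟩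

theorem exists_eq_insertMax_of_not_occurs {e : List ℕ} (hav : ¬ π.Occurs e)
    (he : ∀ x ∈ e, x ≤ M) (hM : M ∈ e) :
    ∃ m p w, 1 ≤ m ∧ p ≤ w.length ∧ (∀ x ∈ w, x < M) ∧ e = π.insertMax M m p w := by
  obtain ⟨u, r, rfl, hMu⟩ := eq_append_cons_of_mem hM
  have hu : ∀ x ∈ u, x < M := fun x hx =>
    (he x (mem_append_left _ hx)).lt_of_ne fun h => hMu (h ▸ hx)
  have hr : ∀ x ∈ r, x ≤ M := fun x hx => he x (by simp [hx])
  have hav' : ¬ π.Occurs (M :: r) := fun h => hav (h.mono (sublist_append_right _ _))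
  obtain ⟨j, q, hq, rfl⟩ : ∃ j q, (∀ x ∈ q, x < M) ∧ r = π.arrange (replicate j M) q := by
    cases π
    · exact exists_eq_replicate_append_of_not_occurs hav' hr
    · exact exists_eq_append_replicate_of_not_occurs hav' hr
  refine ⟨j + 1, u.length, u ++ q, by omega, by simp, ?_, by simp [insertMax]⟩
  simp only [mem_append]
  rintro x (hx | hx)
  exacts [hu x hx, hq x hx]

theorem not_occurs_insertMax (hw : ∀ x ∈ w, x < M) (hav : ¬ π.Occurs w) :
    ¬ π.Occurs (π.insertMax M m p w) := by
  rintro ⟨a, b, c, hmatch, hs⟩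
  have hle : ∀ x ∈ [a, b, c], x ≤ M := fun x hx => le_of_mem_insertMax hw (hs.subset hx)
  by_cases hlt : ∀ x ∈ [a, b, c], x < M
  · refine hav ⟨a, b, c, hmatch, ?_⟩
    have hfilter : [a, b, c].filter (· < M) = [a, b, c] := filter_eq_self.mpr (by simpa using hlt)
    rw [← filter_insertMax (π := π) (m := m) (p := p) hw, ← hfilter]
    exact hs.filter _
  -- Otherwise the pattern's top value is `M`, but no smaller entry of `e` lies between two
  -- copies of `M` (101) or after two of them (110).
  have hM : ∀ l : List ℕ, l ⊆ w → M ∉ l := fun l hl h => lt_irrefl M (hw M (hl h))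
  simp only [mem_cons, not_mem_nil, or_false, forall_eq_or_imp, forall_eq] at hle hlt
  cases π with
  | p101 =>
    obtain ⟨hba, rfl⟩ := hmatch
    obtain rfl : a = M := by omega
    have hs' := (cons_sublist_of_cons_sublist_append (hM _ (take_subset _ _)) hs).of_cons_cons
    have hb : b ∉ replicate (m - 1) a := by simp [hba.ne]
    exact hM _ (drop_subset _ _) ((cons_sublist_of_cons_sublist_append hb hs').subset (by simp))
  | p110 =>
    obtain ⟨rfl, hcb⟩ := hmatch
    obtain rfl : a = M := by omega
    have hs' := (cons_sublist_of_cons_sublist_append (hM _ (take_subset _ _)) hs).of_cons_cons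
    have hc := (cons_sublist_of_cons_sublist_append (hM _ (drop_subset _ _)) hs').subset
      (mem_cons_of_mem _ mem_cons_self)
    exact hcb.ne (eq_of_mem_replicate hc)

theorem forall₂_lt_insertMax_iff {b : List ℕ} (ht : Admissible b M m p) (hw : ∀ x ∈ w, x < M)
    (hlen : w.length + m = b.length) :
    Forall₂ (· < ·) (π.insertMax M m p w) b ↔ Forall₂ (· < ·) w (reducedBound b M m) := by
  obtain ⟨hm, hpm, hMb⟩ := ht
  have hpw : (take p w).length = p := length_take_of_le (by omega)
  have hbw : b.length - m = w.length := by omega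
  rw [forall₂_lt_reducedBound_iff, and_iff_right hw, hbw, insertMax,
    forall₂_append_iff_of_forall_mem_drop, hpw, ← take_append_drop p w,
    forall₂_append_iff_of_forall_mem_drop, hpw, take_append_drop, take_take,
    min_eq_left (by omega)]
  · intro x hx y hy
    rw [hpw, take_append_drop, drop_take] at hy
    exact (hw x (drop_subset _ _ hx)).trans (hMb y (take_subset _ _ hy))
  · simp only [length_append, length_take, length_drop]
    omega
  · intro x hx y hy
    rw [hpw] at hy
    exact (le_of_mem_insertMax hw (mem_append_right _ hx)).trans_lt (hMb y hy)
  · simp only [length_cons, (π.arrange_perm _ _).length_eq, length_append, length_replicate,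
      length_drop, hpw]
    omega

end Pattern

def boundedLists (b : List ℕ) : Finset (List ℕ) :=
  (b.map List.range).sections.toFinset

theorem mem_boundedLists {b e : List ℕ} : e ∈ boundedLists b ↔ Forall₂ (· < ·) e b := by
  simp [boundedLists, mem_sections, forall₂_map_right_iff]

open Classical in
noncomputable def avoiders (π : Pattern) (b : List ℕ) : Finset (List ℕ) :=
  (boundedLists b).filter (¬ π.Occurs ·)

section Avoiders

variable {π : Pattern} {b e w : List ℕ} {M m p : ℕ}

theorem mem_avoiders : e ∈ avoiders π b ↔ Forall₂ (· < ·) e b ∧ ¬ π.Occurs e := by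
  classical
  rw [avoiders, Finset.mem_filter, mem_boundedLists]

theorem avoiders_nil : avoiders π [] = {[]} := by
  ext e
  rw [mem_avoiders, forall₂_nil_right_iff, Finset.mem_singleton, and_iff_left_iff_imp]
  rintro rfl ⟨a, b, c, -, hs⟩
  simp at hs

theorem admissible_and_mem_image_of_mem_avoiders (hb : b.Pairwise (· ≤ ·))
    (he : e ∈ avoiders π b) (hne : e ≠ []) (hprof : maxProfile e = (M, m, p)) :
    Admissible b M m p ∧ ∃ w ∈ avoiders π (reducedBound b M m), π.insertMax M m p w = e := by
  obtain ⟨hbd, hav⟩ := mem_avoiders.mp he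
  obtain ⟨M', hM'⟩ := Option.ne_none_iff_exists'.mp (mt max?_eq_none_iff.mp hne)
  obtain ⟨hmem, hle⟩ := max?_eq_some_iff.mp hM'
  obtain ⟨m', p', w, hm, hp, hw, rfl⟩ := exists_eq_insertMax_of_not_occurs hav hle hmem
  rw [maxProfile_insertMax hw hm hp, Prod.mk.injEq, Prod.mk.injEq] at hprof
  obtain ⟨rfl, rfl, rfl⟩ := hprof
  have hlen : w.length + m' = b.length := length_insertMax hm hp ▸ hbd.length_eq
  have hsuffix : Forall₂ (· < ·) (M' :: π.arrange (replicate (m' - 1) M') (drop p' w))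
      (b.drop p') := by
    simpa [insertMax, drop_left' (length_take_of_le hp)] using forall₂_drop p' hbd
  have ht : Admissible b M' m' p' :=
    ⟨hm, by omega, lt_of_forall₂_lt_cons hsuffix (hb.sublist (drop_sublist _ _))⟩
  refine ⟨ht, w, mem_avoiders.mpr ⟨(forall₂_lt_insertMax_iff ht hw hlen).mp hbd, ?_⟩, rfl⟩
  rw [← filter_insertMax (π := π) (m := m') (p := p') hw]
  exact fun h => hav (h.mono filter_sublist)

theorem lt_and_length_of_mem_avoiders_reducedBound (ht : Admissible b M m p)
    (hw : w ∈ avoiders π (reducedBound b M m)) :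
    (∀ x ∈ w, x < M) ∧ w.length + m = b.length := by
  have hbd := (mem_avoiders.mp hw).1
  refine ⟨(forall₂_lt_reducedBound_iff.mp hbd).1, ?_⟩
  have := hbd.length_eq
  simp only [reducedBound, length_map, length_take] at this
  have := ht.2.1
  omega

theorem insertMax_mem_avoiders (ht : Admissible b M m p)
    (hw : w ∈ avoiders π (reducedBound b M m)) : π.insertMax M m p w ∈ avoiders π b := by
  obtain ⟨hbd, hav⟩ := mem_avoiders.mp hw
  obtain ⟨hwM, hlen⟩ := lt_and_length_of_mem_avoiders_reducedBound ht hw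
  exact mem_avoiders.mpr
    ⟨(forall₂_lt_insertMax_iff ht hwM hlen).mpr hbd, not_occurs_insertMax hwM hav⟩

theorem filter_maxProfile_eq_image (hb : b.Pairwise (· ≤ ·)) (ht : Admissible b M m p) :
    (avoiders π b).filter (maxProfile · = (M, m, p)) =
      (avoiders π (reducedBound b M m)).image (π.insertMax M m p) := by
  have hm := ht.1
  have hpm := ht.2.1
  ext e
  rw [Finset.mem_filter, Finset.mem_image]
  constructor
  · rintro ⟨he, hprof⟩
    refine (admissible_and_mem_image_of_mem_avoiders hb he ?_ hprof).2
    rintro rfl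
    have := (mem_avoiders.mp he).1.length_eq
    simp only [length_nil] at this
    omega
  · rintro ⟨w, hw, rfl⟩
    obtain ⟨hwM, hlen⟩ := lt_and_length_of_mem_avoiders_reducedBound ht hw
    exact ⟨insertMax_mem_avoiders ht hw, maxProfile_insertMax hwM hm (by omega)⟩

theorem filter_maxProfile_eq_empty (hb : b.Pairwise (· ≤ ·)) (hne : b ≠ [])
    (ht : ¬ Admissible b M m p) : (avoiders π b).filter (maxProfile · = (M, m, p)) = ∅ := by
  refine Finset.filter_eq_empty_iff.mpr fun e he hprof => ht ?_
  refine (admissible_and_mem_image_of_mem_avoiders hb he ?_ hprof).1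
  rintro rfl
  exact hne (forall₂_nil_left_iff.mp (mem_avoiders.mp he).1)

open Classical in
theorem card_avoiders_eq_sum (π : Pattern) (hb : b.Pairwise (· ≤ ·)) (hne : b ≠ []) :
    (avoiders π b).card = ∑ t ∈ (boundedLists b).image maxProfile,
      if Admissible b t.1 t.2.1 t.2.2 then (avoiders π (reducedBound b t.1 t.2.1)).card
      else 0 := by
  rw [Finset.card_eq_sum_card_fiberwise (s := avoiders π b) fun e he =>
    Finset.mem_image_of_mem maxProfile (mem_boundedLists.mpr (mem_avoiders.mp he).1)]
  refine Finset.sum_congr rfl fun ⟨M, m, p⟩ _ => ?_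
  split_ifs with ht
  · rw [filter_maxProfile_eq_image hb ht, Finset.card_image_of_injOn]
    exact injOn_insertMax.mono fun w hw =>
      (lt_and_length_of_mem_avoiders_reducedBound ht hw).1
  · rw [filter_maxProfile_eq_empty hb hne ht, Finset.card_empty]

theorem card_avoiders_eq (π π' : Pattern) (hb : b.Pairwise (· ≤ ·)) :
    (avoiders π b).card = (avoiders π' b).card := by
  induction hlen : b.length using Nat.strong_induction_on generalizing b with
  | _ n ih =>
  rcases eq_or_ne b [] with rfl | hne
  · rw [avoiders_nil, avoiders_nil]
  rw [card_avoiders_eq_sum π hb hne, card_avoiders_eq_sum π' hb hne]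
  refine Finset.sum_congr rfl fun t _ => ?_
  split_ifs with ht
  · have hlt : (reducedBound b t.1 t.2.1).length < n := by
      have := length_pos_iff.mpr hne
      have := ht.1
      simp only [reducedBound, length_map, length_take]
      omega
    exact ih _ hlt (pairwise_reducedBound hb _ _) rfl
  · rfl

end Avoiders

theorem ncard_eq_card_avoiders (π : Pattern) (n : ℕ) :
    {e : Fin n → ℕ | (∀ i : Fin n, e i ≤ (i : ℕ)) ∧
      ¬ ∃ i j k : Fin n, i < j ∧ j < k ∧ π.Matches (e i) (e j) (e k)}.ncard =
      (avoiders π (ofFn fun i : Fin n => (i : ℕ) + 1)).card := by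
  have hrange : (avoiders π (ofFn fun i : Fin n => (i : ℕ) + 1) : Set (List ℕ)) ⊆
      Set.range (ofFn (n := n)) := by
    intro l hl
    have hlen : l.length = n := by simpa using (mem_avoiders.mp hl).1.length_eq
    exact ⟨fun i : Fin n => l[i.val], by apply ext_getElem <;> simp [hlen]⟩
  rw [← Set.ncard_coe_finset, ← Set.ncard_preimage_of_injective_subset_range ofFn_injective hrange]
  congr 1
  ext e
  simp [mem_avoiders, forall₂_ofFn_iff, π.occurs_ofFn_iff]

theorem inv_avoid_101_eq_avoid_110_general (n : ℕ) :
    Set.ncard {e : Fin n → ℕ | (∀ i : Fin n, e i ≤ (i : ℕ)) ∧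
      ¬ ∃ i j k : Fin n, i < j ∧ j < k ∧ e j < e i ∧ e i = e k} =
    Set.ncard {e : Fin n → ℕ | (∀ i : Fin n, e i ≤ (i : ℕ)) ∧
      ¬ ∃ i j k : Fin n, i < j ∧ j < k ∧ e i = e j ∧ e k < e j} := by
  have hb : (ofFn fun i : Fin n => (i : ℕ) + 1).Pairwise (· ≤ ·) :=
    pairwise_ofFn.mpr fun i j hij => by simpa using hij.le
  exact (ncard_eq_card_avoiders p101 n).trans
    ((card_avoiders_eq p101 p110 hb).trans (ncard_eq_card_avoiders p110 n).symm)

/-- For `n ≥ 1`, the number of inversion sequences of length `n` avoiding the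
pattern 101 equals the number avoiding the pattern 110. -/
theorem inv_avoid_101_eq_avoid_110 (n : ℕ) (hn : 1 ≤ n) :
    Set.ncard {e : Fin n → ℕ | (∀ i : Fin n, e i ≤ (i : ℕ)) ∧
      ¬ ∃ i j k : Fin n, i < j ∧ j < k ∧ e j < e i ∧ e i = e k} =
    Set.ncard {e : Fin n → ℕ | (∀ i : Fin n, e i ≤ (i : ℕ)) ∧
      ¬ ∃ i j k : Fin n, i < j ∧ j < k ∧ e i = e j ∧ e k < e j} :=
  inv_avoid_101_eq_avoid_110_general n
end
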